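/- arXiv:0904.1540 — 6 statements merged into one kernel-verified Lean document; each statement's English description precedes it below -/
import Mathlib

section
/- Let (R, m) be a Noetherian local domain of prime characteristic p. Then for every prime ideal P of R_∞, pd_{R_∞}(R_∞/P) ≤ 2ℓ, where ℓ is the minimal number of generators of the ideal P ∩ R of the Noetherian ring R; in particular, every prime ideal P of R_∞ satisfies pd_{R_∞}(R_∞/P) < ∞. -/
set_option synthInstance.maxHeartbeats 400000
set_option maxHeartbeats 1000000

universe u

open CategoryTheory CategoryTheory.Limits

/-- `hasPdLE A n M` : the `A`-module `M` admits a projective resolution of length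
at most `n`, i.e. has projective dimension `≤ n`. -/
def hasPdLE (A : Type u) [CommRing A] : ℕ → ModuleCat.{u} A → Prop
  | 0, M => Projective M
  | n + 1, M => ∃ (P : ModuleCat.{u} A) (f : P ⟶ M), Epi f ∧ Projective P ∧
      hasPdLE A n (kernel f)

/-- The projective dimension `pd_A(M)` of an `A`-module `M`, valued in `ℕ∞`
(`⊤` if no finite projective resolution exists). -/
noncomputable def projDim (A : Type u) [CommRing A] (M : Type u) [AddCommGroup M]
    [Module A M] : ℕ∞ :=
  sInf {n : ℕ∞ | ∃ k : ℕ, n = k ∧ hasPdLE A k (ModuleCat.of A M)}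

/-- The global dimension of a commutative ring: the supremum of the projective
dimensions of all its modules. -/
noncomputable def gldim (A : Type u) [CommRing A] : ℕ∞ :=
  ⨆ M : ModuleCat.{u} A, projDim A M

/-- Reinterpret an `ℕ∞`-valued homological dimension as an element of
`WithBot (WithTop ℕ)`, to compare it with Krull dimensions. -/
def toWB (n : ℕ∞) : WithBot (WithTop ℕ) := ((show WithTop ℕ from n) : WithBot (WithTop ℕ))

/-- The perfect closure `R_∞ = {x ∈ R⁺ : x ^ (p ^ n) ∈ R for some n ≥ 0}` of a domain
`R` of prime characteristic `p`, realized as a subring of an algebraic closure of the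
fraction field of `R` (every element with `x ^ (p ^ n) ∈ R` is automatically integral
over `R`, so this set coincides with the corresponding subset of `R⁺`). -/
def RInfSubring (R : Type u) [CommRing R] [IsDomain R] (p : ℕ) (hp : p.Prime)
    [CharP R p] : Subring (AlgebraicClosure (FractionRing R)) where
  carrier := {x | ∃ (n : ℕ) (r : R),
    algebraMap R (AlgebraicClosure (FractionRing R)) r = x ^ p ^ n}
  zero_mem' := ⟨0, 0, by simp⟩
  one_mem' := ⟨0, 1, by simp⟩
  mul_mem' := by
    rintro a b ⟨n, r, hr⟩ ⟨m, s, hs⟩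
    refine ⟨n + m, r ^ p ^ m * s ^ p ^ n, ?_⟩
    rw [map_mul, map_pow, map_pow, hr, hs, mul_pow, ← pow_mul, ← pow_mul,
      ← pow_add, ← pow_add, Nat.add_comm m n]
  add_mem' := by
    haveI : CharP (FractionRing R) p :=
      charP_of_injective_algebraMap (IsFractionRing.injective R (FractionRing R)) p
    haveI : CharP (AlgebraicClosure (FractionRing R)) p :=
      charP_of_injective_algebraMap
        (algebraMap (FractionRing R) (AlgebraicClosure (FractionRing R))).injective p
    haveI := Fact.mk hp
    haveI : ExpChar (AlgebraicClosure (FractionRing R)) p := .prime hp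
    rintro a b ⟨n, r, hr⟩ ⟨m, s, hs⟩
    refine ⟨n + m, r ^ p ^ m + s ^ p ^ n, ?_⟩
    rw [map_add, map_pow, map_pow, hr, hs, add_pow_char_pow, ← pow_mul, ← pow_mul,
      ← pow_add, ← pow_add, Nat.add_comm m n]
  neg_mem' := by
    rintro a ⟨n, r, hr⟩
    rcases Nat.even_or_odd (p ^ n) with he | ho
    · exact ⟨n, r, by rw [hr, he.neg_pow]⟩
    · exact ⟨n, -r, by rw [map_neg, hr, ho.neg_pow]⟩

/-- The perfect closure `R_∞` as a type. -/
abbrev RInf (R : Type u) [CommRing R] [IsDomain R] (p : ℕ) (hp : p.Prime) [CharP R p] :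
    Type u := ↥(RInfSubring R p hp)

/-- The canonical injection `R →+* R_∞`. -/
noncomputable def toRInf (R : Type u) [CommRing R] [IsDomain R] (p : ℕ) (hp : p.Prime)
    [CharP R p] : R →+* RInf R p hp :=
  (algebraMap R (AlgebraicClosure (FractionRing R))).codRestrict
    (RInfSubring R p hp).toSubsemiring (fun r => ⟨0, r, by simp⟩)

namespace PdAux

variable {A : Type u} [CommRing A]

/-- transport a module `K'` isomorphic onto the kernel of `g`. -/
noncomputable def kerEquivOfRange {K' Y N : Type u} [AddCommGroup K'] [Module A K']
    [AddCommGroup Y] [Module A Y] [AddCommGroup N] [Module A N]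
    (j : K' →ₗ[A] Y) (hinj : Function.Injective j) (g : Y →ₗ[A] N)
    (h : LinearMap.range j = LinearMap.ker g) : K' ≃ₗ[A] LinearMap.ker g :=
  (LinearEquiv.ofInjective j hinj).trans (LinearEquiv.ofEq _ _ h)

lemma hasPdLE_of_iso : ∀ (n : ℕ) {M N : ModuleCat.{u} A}, (M ≅ N) → hasPdLE A n M → hasPdLE A n N
  | 0, M, N, e, h => Projective.of_iso e h
  | n+1, M, N, e, ⟨P, f, hf, hP, hk⟩ => by
    haveI : Epi f := hf
    exact ⟨P, f ≫ e.hom, epi_comp _ _, hP,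
      hasPdLE_of_iso n (kernelCompMono f e.hom).symm hk⟩

lemma hasPdLE_congr (n : ℕ) {M N : Type u} [AddCommGroup M] [Module A M]
    [AddCommGroup N] [Module A N] (e : M ≃ₗ[A] N) :
    hasPdLE A n (ModuleCat.of A M) → hasPdLE A n (ModuleCat.of A N) :=
  hasPdLE_of_iso n e.toModuleIso

lemma hasPdLE_zero_iff {M : Type u} [AddCommGroup M] [Module A M] :
    hasPdLE A 0 (ModuleCat.of A M) ↔ Module.Projective A M :=
  (IsProjective.iff_projective M).symm

lemma hasPdLE_succ_iff (n : ℕ) {M : Type u} [AddCommGroup M] [Module A M] :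
    hasPdLE A (n+1) (ModuleCat.of A M) ↔
    ∃ (X : ModuleCat.{u} A) (f : X →ₗ[A] M), Function.Surjective f ∧ Module.Projective A X ∧
      hasPdLE A n (ModuleCat.of A (LinearMap.ker f)) := by
  constructor
  · rintro ⟨P, f, hf, hP, hk⟩
    exact ⟨P, f.hom, (ModuleCat.epi_iff_surjective f).mp hf,
      (IsProjective.iff_projective P).mpr (Projective.of_iso (Iso.refl P : ModuleCat.of A P ≅ P).symm hP),
      hasPdLE_of_iso n (ModuleCat.kernelIsoKer f) hk⟩
  · rintro ⟨X, f, hs, hproj, hk⟩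
    exact ⟨X, ModuleCat.ofHom f, (ModuleCat.epi_iff_surjective (ModuleCat.ofHom f)).mpr hs,
      Projective.of_iso (Iso.refl X : ModuleCat.of A X ≅ X) ((IsProjective.iff_projective X).mp hproj),
      hasPdLE_of_iso n (ModuleCat.kernelIsoKer (ModuleCat.ofHom f)).symm hk⟩

lemma projective_of_subsingleton {M : Type u} [AddCommGroup M] [Module A M]
    [Subsingleton M] : Module.Projective A M :=
  Module.Projective.of_equiv
    (LinearEquiv.ofSubsingleton (PUnit.{u+1} : Type u) M)

lemma hasPdLE_succ_self : ∀ (n : ℕ) (M : ModuleCat.{u} A), hasPdLE A n M → hasPdLE A (n+1) M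
  | 0, M, h => by
    apply hasPdLE_of_iso 1 (Iso.refl M : ModuleCat.of A M ≅ M)
    rw [hasPdLE_succ_iff]
    refine ⟨M, LinearMap.id, Function.surjective_id,
      (IsProjective.iff_projective M).mpr (Projective.of_iso (Iso.refl M : ModuleCat.of A M ≅ M).symm h), ?_⟩
    rw [hasPdLE_zero_iff, LinearMap.ker_id]
    exact projective_of_subsingleton
  | n+1, M, ⟨P, f, hf, hP, hk⟩ => ⟨P, f, hf, hP, hasPdLE_succ_self n _ hk⟩

lemma hasPdLE_prod : ∀ (n : ℕ) {K Q : Type u} [AddCommGroup K] [Module A K]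
    [AddCommGroup Q] [Module A Q],
    hasPdLE A n (ModuleCat.of A K) → Module.Projective A Q →
    hasPdLE A n (ModuleCat.of A (K × Q))
  | 0, K, Q, _, _, _, _, hK, hQ => by
    rw [hasPdLE_zero_iff] at hK ⊢
    infer_instance
  | n+1, K, Q, _, _, _, _, hK, hQ => by
    rw [hasPdLE_succ_iff] at hK ⊢
    obtain ⟨X, f, hs, hX, hker⟩ := hK
    refine ⟨ModuleCat.of A (X × Q), f.prodMap LinearMap.id, ?_, ?_, ?_⟩
    · rintro ⟨k, q⟩
      obtain ⟨x, rfl⟩ := hs k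
      exact ⟨(x, q), rfl⟩
    · exact (inferInstance : Module.Projective A (↥X × Q))
    · have hkq : hasPdLE A n (ModuleCat.of A
          (↥(LinearMap.ker f) × ↥(⊥ : Submodule A Q))) :=
        hasPdLE_prod n hker projective_of_subsingleton
      refine hasPdLE_congr n (kerEquivOfRange
        ((LinearMap.ker f).subtype.prodMap (⊥ : Submodule A Q).subtype) ?_ _ ?_) hkq
      · rintro ⟨⟨x, hx⟩, ⟨q, hq⟩⟩ ⟨⟨x', hx'⟩, ⟨q', hq'⟩⟩ h
        have h1 : x = x' := congrArg Prod.fst h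
        have h2 : q = q' := congrArg Prod.snd h
        exact Prod.ext (Subtype.ext h1) (Subtype.ext h2)
      · apply le_antisymm
        · rintro y ⟨⟨⟨x, hx⟩, ⟨q, hq⟩⟩, rfl⟩
          have hq0 : q = 0 := hq
          simp only [LinearMap.mem_ker, LinearMap.prodMap_apply, Submodule.coe_subtype]
          ext
          · exact hx
          · simpa using hq0
        · rintro ⟨x, q⟩ hy
          rw [LinearMap.mem_ker] at hy
          have h1 : f x = 0 := congrArg Prod.fst hy
          have h2 : q = 0 := congrArg Prod.snd hy
          exact ⟨(⟨x, h1⟩, ⟨q, h2⟩), rfl⟩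

lemma hasPdLE_finsupp : ∀ (n : ℕ) {M : Type u} [AddCommGroup M] [Module A M],
    hasPdLE A n (ModuleCat.of A M) → hasPdLE A n (ModuleCat.of A (ℕ →₀ M))
  | 0, M, _, _, hM => by
    classical
    rw [hasPdLE_zero_iff] at hM ⊢
    exact Module.Projective.of_equiv
      ((finsuppLequivDFinsupp (ι := ℕ) (M := M) A).symm)
  | n+1, M, _, _, hM => by
    classical
    rw [hasPdLE_succ_iff] at hM ⊢
    obtain ⟨X, f, hs, hX, hker⟩ := hM
    refine ⟨ModuleCat.of A (ℕ →₀ X), Finsupp.mapRange.linearMap f,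
      Finsupp.mapRange_surjective _ (map_zero f) hs, ?_, ?_⟩
    · exact Module.Projective.of_equiv
        ((finsuppLequivDFinsupp (ι := ℕ) (M := (X : Type u)) A).symm)
    · have hkk := hasPdLE_finsupp n hker
      refine hasPdLE_congr n (kerEquivOfRange
        (Finsupp.mapRange.linearMap (LinearMap.ker f).subtype) ?_ _ ?_) hkk
      · intro a b hab
        ext e
        have := congrArg (fun z : (ℕ →₀ (X : Type u)) => z e) hab
        simp only [Finsupp.mapRange.linearMap_apply, Finsupp.mapRange_apply,
          Submodule.coe_subtype] at this
        exact this
      · apply le_antisymm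
        · rintro y ⟨c, rfl⟩
          rw [LinearMap.mem_ker]
          ext e
          simp only [Finsupp.mapRange.linearMap_apply, Finsupp.mapRange_apply,
            Submodule.coe_subtype, Finsupp.coe_zero, Pi.zero_apply]
          exact (c e).2
        · intro c hc
          have hc' : ∀ e, f (c e) = 0 := by
            intro e
            rw [LinearMap.mem_ker] at hc
            have := congrArg (fun z : (ℕ →₀ M) => z e) hc
            simpa only [Finsupp.mapRange.linearMap_apply, Finsupp.mapRange_apply,
              Finsupp.coe_zero, Pi.zero_apply] using this
          refine ⟨c.mapRange (fun x => if h : f x = 0 then (⟨x, h⟩ : LinearMap.ker f) else 0)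
            (by beta_reduce; rw [dif_pos (map_zero f)]; exact Subtype.ext rfl), ?_⟩
          ext e
          simp only [Finsupp.mapRange.linearMap_apply, Finsupp.mapRange_apply,
            Submodule.coe_subtype, hc' e, dif_pos]


lemma pd_joint : ∀ (k : ℕ),
    (∀ (a c : ℕ), a + c ≤ k → ∀ {X M : Type u} [AddCommGroup X] [Module A X]
      [AddCommGroup M] [Module A M] (f : X →ₗ[A] M), Function.Surjective f →
      hasPdLE A a (ModuleCat.of A (LinearMap.ker f)) → hasPdLE A c (ModuleCat.of A M) →
      hasPdLE A (max a c) (ModuleCat.of A X)) ∧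
    (∀ (a b : ℕ), a + b ≤ k → ∀ {X M : Type u} [AddCommGroup X] [Module A X]
      [AddCommGroup M] [Module A M] (f : X →ₗ[A] M), Function.Surjective f →
      hasPdLE A a (ModuleCat.of A (LinearMap.ker f)) → hasPdLE A b (ModuleCat.of A X) →
      hasPdLE A (max b (a+1)) (ModuleCat.of A M)) := by
  intro k
  induction k using Nat.strong_induction_on with
  | _ k IH =>
  constructor
  · intro a c hk X M _ _ _ _ f hs hK hM
    match c, hM with
    | 0, hM =>
      haveI : Module.Projective A M := hasPdLE_zero_iff.mp hM
      obtain ⟨g, hg⟩ := Module.projective_lifting_property f LinearMap.id hs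
      have hgf : ∀ m, f (g m) = m := fun m => LinearMap.ext_iff.mp hg m
      have E : (↥(LinearMap.ker f) × M) ≃ₗ[A] X := by
        refine LinearEquiv.ofBijective
          ((LinearMap.ker f).subtype.comp (LinearMap.fst A ↥(LinearMap.ker f) M) +
            g.comp (LinearMap.snd A ↥(LinearMap.ker f) M)) ⟨?_, ?_⟩
        · rintro ⟨⟨x, hx⟩, m⟩ ⟨⟨x', hx'⟩, m'⟩ hh
          simp only [LinearMap.add_apply, LinearMap.comp_apply, LinearMap.fst_apply,
            LinearMap.snd_apply, Submodule.coe_subtype] at hh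
          have hm : m = m' := by
            have := congrArg f hh
            simp only [map_add, hgf] at this
            rw [LinearMap.mem_ker.mp hx, LinearMap.mem_ker.mp hx'] at this
            simpa using this
          subst hm
          have hx0 : x = x' := by
            have := hh
            exact add_right_cancel this
          exact Prod.ext (Subtype.ext hx0) rfl
        · intro x
          refine ⟨(⟨x - g (f x), ?_⟩, f x), ?_⟩
          · rw [LinearMap.mem_ker, map_sub, hgf, sub_self]
          · simp only [LinearMap.add_apply, LinearMap.comp_apply, LinearMap.fst_apply,
              LinearMap.snd_apply, Submodule.coe_subtype]
            abel
      rw [Nat.max_zero]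
      exact hasPdLE_congr a E (hasPdLE_prod a hK (inferInstance))
    | (m+1), hM =>
      obtain ⟨Q, g, hgs, hQ, hkg⟩ := (hasPdLE_succ_iff m).mp hM
      set h : (X × ↥Q) →ₗ[A] M :=
        f.comp (LinearMap.fst A X ↥Q) - g.comp (LinearMap.snd A X ↥Q) with hh
      have hmem : ∀ z : X × ↥Q, z ∈ LinearMap.ker h ↔ f z.1 = g z.2 := by
        intro z
        rw [LinearMap.mem_ker, hh]
        simp only [LinearMap.sub_apply, LinearMap.comp_apply, LinearMap.fst_apply,
          LinearMap.snd_apply]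
        exact sub_eq_zero
      set B := LinearMap.ker h with hB
      -- second projection
      set π₂ : ↥B →ₗ[A] ↥Q := (LinearMap.snd A X ↥Q).comp B.subtype with hπ₂
      have hπ₂s : Function.Surjective π₂ := by
        intro qq
        obtain ⟨x, hx⟩ := hs (g qq)
        exact ⟨⟨(x, qq), (hmem _).mpr hx⟩, rfl⟩
      have eK : ↥(LinearMap.ker f) ≃ₗ[A] ↥(LinearMap.ker π₂) := by
        refine kerEquivOfRange (LinearMap.codRestrict B
          ((LinearMap.inl A X ↥Q).comp (LinearMap.ker f).subtype) ?_) ?_ _ ?_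
        · intro z
          refine (hmem _).mpr ?_
          simp only [LinearMap.comp_apply, LinearMap.inl_apply, Submodule.coe_subtype]
          rw [LinearMap.mem_ker.mp z.2, map_zero]
        · intro z z' hzz
          have := congrArg (fun w : ↥B => (w : X × ↥Q).1) hzz
          exact Subtype.ext this
        · apply le_antisymm
          · rintro y ⟨z, rfl⟩
            rw [LinearMap.mem_ker]
            rfl
          · rintro ⟨⟨x, qq⟩, hxq⟩ hy
            have hq0 : qq = 0 := hy
            have hfx : f x = 0 := by
              have := (hmem _).mp hxq
              simp only at this
              rw [this, hq0, map_zero]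
            refine ⟨⟨x, hfx⟩, Subtype.ext ?_⟩
            simp only [LinearMap.codRestrict_apply, LinearMap.comp_apply,
              Submodule.coe_subtype, LinearMap.inl_apply]
            exact Prod.ext rfl hq0.symm
      have pdB : hasPdLE A (max a 0) (ModuleCat.of A ↥B) := by
        refine ((IH a (by omega)).1) a 0 le_rfl π₂ hπ₂s
          (hasPdLE_congr a eK hK) (hasPdLE_zero_iff.mpr hQ)
      rw [Nat.max_zero] at pdB
      set π₁ : ↥B →ₗ[A] X := (LinearMap.fst A X ↥Q).comp B.subtype with hπ₁
      have hπ₁s : Function.Surjective π₁ := by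
        intro x
        obtain ⟨qq, hq⟩ := hgs (f x)
        exact ⟨⟨(x, qq), (hmem _).mpr hq.symm⟩, rfl⟩
      have eG : ↥(LinearMap.ker g) ≃ₗ[A] ↥(LinearMap.ker π₁) := by
        refine kerEquivOfRange (LinearMap.codRestrict B
          ((LinearMap.inr A X ↥Q).comp (LinearMap.ker g).subtype) ?_) ?_ _ ?_
        · intro z
          refine (hmem _).mpr ?_
          simp only [LinearMap.comp_apply, LinearMap.inr_apply, Submodule.coe_subtype]
          rw [LinearMap.mem_ker.mp z.2, map_zero]
        · intro z z' hzz
          have := congrArg (fun w : ↥B => (w : X × ↥Q).2) hzz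
          exact Subtype.ext this
        · apply le_antisymm
          · rintro y ⟨z, rfl⟩
            rw [LinearMap.mem_ker]
            rfl
          · rintro ⟨⟨x, qq⟩, hxq⟩ hy
            have hx0 : x = 0 := hy
            have hgq : g qq = 0 := by
              have := (hmem _).mp hxq
              simp only at this
              rw [← this, hx0, map_zero]
            refine ⟨⟨qq, hgq⟩, Subtype.ext ?_⟩
            simp only [LinearMap.codRestrict_apply, LinearMap.comp_apply,
              Submodule.coe_subtype, LinearMap.inr_apply]
            exact Prod.ext hx0.symm rfl
      exact ((IH (m + a) (by omega)).2) m a le_rfl π₁ hπ₁s (hasPdLE_congr m eG hkg) pdB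
  · intro a b hk X M _ _ _ _ f hs hK hX
    match b, hX with
    | 0, hX =>
      rw [Nat.zero_max]
      exact (hasPdLE_succ_iff a).mpr
        ⟨ModuleCat.of A X, f, hs, hasPdLE_zero_iff.mp hX, hK⟩
    | (n+1), hX =>
      obtain ⟨Q, g, hgs, hQ, hkg⟩ := (hasPdLE_succ_iff n).mp hX
      set fg : ↥Q →ₗ[A] M := f.comp g with hfg
      have hfgs : Function.Surjective fg := by
        intro m'
        obtain ⟨x, hx⟩ := hs m'
        obtain ⟨qq, hq⟩ := hgs x
        exact ⟨qq, by rw [hfg]; simp only [LinearMap.comp_apply]; rw [hq, hx]⟩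
      set ρ : ↥(LinearMap.ker fg) →ₗ[A] ↥(LinearMap.ker f) :=
        LinearMap.codRestrict _ (g.comp (LinearMap.ker fg).subtype)
          (fun z => by
            rw [LinearMap.mem_ker]
            exact LinearMap.mem_ker.mp z.2) with hρ
      have hρs : Function.Surjective ρ := by
        rintro ⟨x, hx⟩
        obtain ⟨qq, hq⟩ := hgs x
        have hz : qq ∈ LinearMap.ker fg := by
          rw [LinearMap.mem_ker, hfg]
          simp only [LinearMap.comp_apply]
          rw [hq]
          exact hx
        exact ⟨⟨qq, hz⟩, Subtype.ext hq⟩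
      have eG : ↥(LinearMap.ker g) ≃ₗ[A] ↥(LinearMap.ker ρ) := by
        refine kerEquivOfRange (LinearMap.codRestrict (LinearMap.ker fg)
          (LinearMap.ker g).subtype ?_) ?_ _ ?_
        · intro z
          rw [LinearMap.mem_ker, hfg]
          simp only [LinearMap.comp_apply, Submodule.coe_subtype]
          rw [LinearMap.mem_ker.mp z.2, map_zero]
        · intro z z' hzz
          exact Subtype.ext (congrArg (fun w : ↥(LinearMap.ker fg) => (w : ↥Q)) hzz)
        · apply le_antisymm
          · rintro y ⟨z, rfl⟩
            rw [LinearMap.mem_ker]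
            apply Subtype.ext
            simp only [hρ, LinearMap.codRestrict_apply, LinearMap.comp_apply,
              Submodule.coe_subtype]
            exact LinearMap.mem_ker.mp z.2
          · rintro ⟨qq, hq⟩ hy
            have : g qq = 0 := by
              have := Subtype.ext_iff.mp (LinearMap.mem_ker.mp hy)
              simpa [hρ] using this
            exact ⟨⟨qq, this⟩, Subtype.ext rfl⟩
      have pdK : hasPdLE A (max n a) (ModuleCat.of A ↥(LinearMap.ker fg)) :=
        ((IH (n + a) (by omega)).1) n a le_rfl ρ hρs (hasPdLE_congr n eG hkg) hK
      rw [Nat.succ_max_succ]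
      exact (hasPdLE_succ_iff (max n a)).mpr ⟨Q, fg, hfgs, hQ, pdK⟩

lemma pd_mid (a c : ℕ) {X M : Type u} [AddCommGroup X] [Module A X]
    [AddCommGroup M] [Module A M] (f : X →ₗ[A] M) (hs : Function.Surjective f)
    (hK : hasPdLE A a (ModuleCat.of A (LinearMap.ker f)))
    (hM : hasPdLE A c (ModuleCat.of A M)) :
    hasPdLE A (max a c) (ModuleCat.of A X) :=
  (pd_joint (a + c)).1 a c le_rfl f hs hK hM

lemma pd_quot (a b : ℕ) {X M : Type u} [AddCommGroup X] [Module A X]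
    [AddCommGroup M] [Module A M] (f : X →ₗ[A] M) (hs : Function.Surjective f)
    (hK : hasPdLE A a (ModuleCat.of A (LinearMap.ker f)))
    (hX : hasPdLE A b (ModuleCat.of A X)) :
    hasPdLE A (max b (a+1)) (ModuleCat.of A M) :=
  (pd_joint (a + b)).2 a b le_rfl f hs hK hX

lemma pd_four {D C M M' : Type u} [AddCommGroup D] [Module A D] [AddCommGroup C] [Module A C]
    [AddCommGroup M] [Module A M] [AddCommGroup M'] [Module A M'] (d : ℕ)
    (ψ : D →ₗ[A] C) (φ : C →ₗ[A] M) (q : M →ₗ[A] M')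
    (hψ : Function.Injective ψ) (hexact : LinearMap.ker φ = LinearMap.range ψ)
    (hq : Function.Surjective q) (hkq : LinearMap.ker q = LinearMap.range φ)
    (hD : hasPdLE A d (ModuleCat.of A D)) (hC : hasPdLE A d (ModuleCat.of A C))
    (hM : hasPdLE A d (ModuleCat.of A M)) :
    hasPdLE A (d+2) (ModuleCat.of A M') := by
  have e1 : D ≃ₗ[A] ↥(LinearMap.ker φ.rangeRestrict) :=
    kerEquivOfRange ψ hψ _ (by rw [LinearMap.ker_rangeRestrict, hexact])
  have pdZ : hasPdLE A (max d (d+1)) (ModuleCat.of A ↥(LinearMap.range φ)) :=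
    pd_quot d d φ.rangeRestrict φ.surjective_rangeRestrict
      (hasPdLE_congr d e1 hD) hC
  rw [Nat.max_eq_right (Nat.le_succ d)] at pdZ
  have e2 : ↥(LinearMap.range φ) ≃ₗ[A] ↥(LinearMap.ker q) :=
    LinearEquiv.ofEq _ _ hkq.symm
  have final := pd_quot (d+1) d q hq (hasPdLE_congr (d+1) e2 pdZ) hM
  rwa [Nat.max_eq_right (by omega : d ≤ d + 2)] at final


section Telescope

variable {A : Type u} [CommRing A]

lemma telescope_step (p : ℕ) (hp2 : 2 ≤ p) (σ : A ≃+* A)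
    (hσ : ∀ a : A, (σ a) ^ p = a) (v : ℕ → A) (hvσ : ∀ e, σ (v e) = v (e+1))
    (I : Ideal A) (hI : ∀ z ∈ I, σ z ∈ I) (d : ℕ)
    (hd : hasPdLE A d (ModuleCat.of A (A ⧸ I))) :
    hasPdLE A (d+2) (ModuleCat.of A (A ⧸ (Ideal.span (Set.range v) ⊔ I))) := by
  classical
  set w : ℕ → A := fun e => v (e+1) ^ (p-1) with hw
  set φ : (ℕ →₀ A ⧸ I) →ₗ[A] A ⧸ I :=
    Finsupp.lsum A (fun e => v e • (LinearMap.id : A ⧸ I →ₗ[A] A ⧸ I)) with hφ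
  set ψ : (ℕ →₀ A ⧸ I) →ₗ[A] (ℕ →₀ A ⧸ I) :=
    Finsupp.lsum A (fun e => Finsupp.lsingle e -
      (Finsupp.lsingle (e+1)).comp (w e • (LinearMap.id : A ⧸ I →ₗ[A] A ⧸ I))) with hψdef
  have hp1 : p - 1 + 1 = p := by omega
  have hφ_single : ∀ (e : ℕ) (m : A ⧸ I), φ (Finsupp.single e m) = v e • m := by
    intro e m
    rw [hφ, Finsupp.lsum_single]
    rfl
  have hψ_single : ∀ (e : ℕ) (m : A ⧸ I),
      ψ (Finsupp.single e m) = Finsupp.single e m - Finsupp.single (e+1) (w e • m) := by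
    intro e m
    rw [hψdef, Finsupp.lsum_single]
    rfl
  have hvw : ∀ e, v (e+1) * w e = v e := by
    intro e
    rw [hw]
    show v (e+1) * v (e+1) ^ (p-1) = v e
    rw [← pow_succ', hp1, ← hvσ e]
    exact hσ (v e)
  have hφψ : ∀ x, φ (ψ x) = 0 := by
    have hcomp : φ.comp ψ = 0 := by
      apply Finsupp.lhom_ext
      intro e m
      rw [LinearMap.comp_apply, hψ_single, map_sub, hφ_single, hφ_single,
        smul_smul, hvw, LinearMap.zero_apply, sub_self]
    intro x
    exact LinearMap.ext_iff.mp hcomp x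
  have hkey : ∀ (e : ℕ) (a : A), v e * a ∈ I → w e * a ∈ I := by
    intro e a ha
    have h1 : σ (v e * a) ∈ I := hI _ ha
    rw [map_mul, hvσ] at h1
    have h2 : w e * a = (v (e+1) * σ a) ^ (p-1) * σ a := by
      rw [mul_pow, hw, mul_assoc, ← pow_succ (σ a) (p-1), hp1, hσ]
    rw [h2]
    exact Ideal.mul_mem_right _ _ (Ideal.pow_mem_of_mem _ h1 _ (by omega))
  have hkey' : ∀ (e : ℕ) (m : A ⧸ I), v e • m = 0 → w e • m = 0 := by
    intro e m hm
    obtain ⟨a, rfl⟩ := Submodule.mkQ_surjective I m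
    rw [← map_smul, smul_eq_mul, Submodule.mkQ_apply, Submodule.Quotient.mk_eq_zero] at hm ⊢
    exact hkey e a hm
  have hψinj : Function.Injective ψ := by
    have hz : ∀ c : ℕ →₀ A ⧸ I, ψ c = 0 → c = 0 := by
      intro c hc
      by_contra hne
      have hSne : c.support.Nonempty := Finsupp.support_nonempty_iff.mpr hne
      set a := c.support.min' hSne with ha
      have hval : ψ c a = c a := by
        have hexp : ψ c = c.sum (fun e m => Finsupp.single e m -
            Finsupp.single (e+1) (w e • m)) := by
          conv_lhs => rw [← c.sum_single]
          rw [map_finsuppSum]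
          exact Finsupp.sum_congr (fun e _ => hψ_single e (c e))
        rw [hexp, Finsupp.sum_apply, Finsupp.sum]
        have hterm : ∀ e ∈ c.support,
            (Finsupp.single e (c e) - Finsupp.single (e+1) (w e • c e)) a
              = if e = a then c e else 0 := by
          intro e he
          rw [Finsupp.sub_apply, Finsupp.single_apply, Finsupp.single_apply]
          have hlt : ¬ (e + 1 = a) := by
            have := c.support.min'_le e he
            omega
          rw [if_neg hlt, sub_zero]
        rw [Finset.sum_congr rfl hterm, Finset.sum_ite_eq' c.support a (fun e => c e),
          if_pos (c.support.min'_mem hSne)]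
      rw [hc] at hval
      exact (Finsupp.mem_support_iff.mp (c.support.min'_mem hSne)) hval.symm
    intro x y hxy
    have : ψ (x - y) = 0 := by rw [map_sub, hxy, sub_self]
    have := hz _ this
    exact sub_eq_zero.mp this
  have hker : ∀ (k a : ℕ) (c : ℕ →₀ A ⧸ I), c.support ⊆ Finset.Ico a (a+k) →
      φ c = 0 → c ∈ LinearMap.range ψ := by
    intro k
    induction k with
    | zero =>
      intro a c hsupp hc
      have : c = 0 := Finsupp.support_eq_empty.mp
        (Finset.subset_empty.mp (by simpa using hsupp))
      rw [this]
      exact zero_mem _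
    | succ k IHk =>
      intro a c hsupp hc
      by_cases hk0 : k = 0
      · subst hk0
        have hsing : c.support ⊆ {a} := by
          intro t ht
          have := hsupp ht
          simp only [Finset.mem_Ico] at this
          simp only [Finset.mem_singleton]
          omega
        have hceq : c = Finsupp.single a (c a) := Finsupp.support_subset_singleton.mp hsing
        have hva : v a • c a = 0 := by
          rw [hceq, hφ_single] at hc
          exact hc
        have hwa : w a • c a = 0 := hkey' a _ hva
        refine ⟨Finsupp.single a (c a), ?_⟩
        rw [hψ_single, hwa, Finsupp.single_zero, sub_zero, ← hceq]
      · set c' := c - ψ (Finsupp.single a (c a)) with hc'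
        have hφc' : φ c' = 0 := by
          rw [hc', map_sub, hc, hφψ, sub_self]
        have hsupp' : c'.support ⊆ Finset.Ico (a+1) ((a+1)+k) := by
          intro t ht
          rw [Finsupp.mem_support_iff] at ht
          by_contra hnot
          apply ht
          have hct : c' t = c t - (Finsupp.single a (c a)) t
              + (Finsupp.single (a+1) (w a • c a)) t := by
            rw [hc', hψ_single, Finsupp.sub_apply, Finsupp.sub_apply]
            ring
          simp only [Finset.mem_Ico, not_and, not_lt] at hnot
          rw [hct, Finsupp.single_apply, Finsupp.single_apply]
          by_cases hta : t = a
          · subst hta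
            rw [if_pos rfl, if_neg (by omega), sub_self, add_zero]
          · have hta1 : ¬ (a + 1 = t) := by
              intro hcontra
              subst hcontra
              exact absurd (hnot le_rfl) (by omega)
            have hct0 : c t = 0 := by
              by_contra hct0
              have := hsupp (Finsupp.mem_support_iff.mpr hct0)
              simp only [Finset.mem_Ico] at this
              have h1 : a + 1 ≤ t := by omega
              have := hnot h1
              omega
            rw [if_neg (fun h => hta h.symm), if_neg hta1, hct0, sub_zero, add_zero]
        obtain ⟨dd, hdd⟩ := IHk (a+1) c' hsupp' hφc'
        refine ⟨dd + Finsupp.single a (c a), ?_⟩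
        rw [map_add, hdd, hc']
        abel
  have hexact : LinearMap.ker φ = LinearMap.range ψ := by
    apply le_antisymm
    · intro c hc
      rw [LinearMap.mem_ker] at hc
      by_cases hcz : c = 0
      · rw [hcz]; exact zero_mem _
      · have hSne : c.support.Nonempty := Finsupp.support_nonempty_iff.mpr hcz
        refine hker (c.support.max' hSne + 1) 0 c ?_ hc
        intro t ht
        simp only [Finset.mem_Ico, Nat.zero_add, zero_le, true_and]
        have := c.support.le_max' t ht
        omega
    · rintro y ⟨x, rfl⟩
      rw [LinearMap.mem_ker]
      exact hφψ x
  have hrangeφ : LinearMap.range φ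
      = Submodule.map I.mkQ (Ideal.span (Set.range v) : Ideal A) := by
    apply le_antisymm
    · rintro y ⟨c, rfl⟩
      have hcs : φ c = c.sum fun e m => v e • m := by
        conv_lhs => rw [← c.sum_single]
        rw [map_finsuppSum]
        exact Finsupp.sum_congr (fun e _ => hφ_single e (c e))
      rw [hcs, Finsupp.sum]
      apply Submodule.sum_mem
      intro e he
      obtain ⟨b, hb⟩ := Submodule.mkQ_surjective I (c e)
      rw [← hb, ← map_smul, smul_eq_mul]
      exact Submodule.mem_map_of_mem
        (Ideal.mul_mem_right _ _ (Ideal.subset_span ⟨e, rfl⟩))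
    · rintro y ⟨b, hb, rfl⟩
      induction hb using Submodule.span_induction with
      | mem x hx =>
        obtain ⟨e, rfl⟩ := hx
        refine ⟨Finsupp.single e (I.mkQ 1), ?_⟩
        rw [hφ_single, ← map_smul, smul_eq_mul, mul_one]
      | zero =>
        rw [map_zero]
        exact zero_mem _
      | add x y _ _ hx hy =>
        rw [map_add]
        exact add_mem hx hy
      | smul a x _ hx =>
        rw [map_smul]
        exact Submodule.smul_mem _ a hx
  set J : Ideal A := Ideal.span (Set.range v) ⊔ I with hJ
  have hIJ : I ≤ Submodule.comap (LinearMap.id : A →ₗ[A] A) J := by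
    intro z hz
    exact Submodule.mem_sup_right hz
  set q : (A ⧸ I) →ₗ[A] (A ⧸ J) := Submodule.mapQ I J LinearMap.id hIJ with hq
  have hqs : Function.Surjective q := by
    intro y
    obtain ⟨b, hb⟩ := Submodule.mkQ_surjective J y
    refine ⟨I.mkQ b, ?_⟩
    rw [hq, Submodule.mkQ_apply, Submodule.mapQ_apply, LinearMap.id_apply, ← hb,
      Submodule.mkQ_apply]
  have hkerq : LinearMap.ker q = LinearMap.range φ := by
    rw [hrangeφ]
    apply le_antisymm
    · intro y hy
      obtain ⟨b, rfl⟩ := Submodule.mkQ_surjective I y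
      rw [LinearMap.mem_ker, hq, Submodule.mkQ_apply, Submodule.mapQ_apply,
        LinearMap.id_apply, Submodule.Quotient.mk_eq_zero] at hy
      obtain ⟨s, hs, i, hi, rfl⟩ := Submodule.mem_sup.mp hy
      refine ⟨s, hs, ?_⟩
      rw [Submodule.mkQ_apply, Submodule.mkQ_apply]
      refine (Submodule.Quotient.eq I).mpr ?_
      rw [sub_add_eq_sub_sub, sub_self, zero_sub]
      exact I.neg_mem hi
    · rintro y ⟨b, hb, rfl⟩
      rw [LinearMap.mem_ker, Submodule.mkQ_apply, hq, Submodule.mapQ_apply,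
        LinearMap.id_apply, Submodule.Quotient.mk_eq_zero]
      exact Submodule.mem_sup_left hb
  exact pd_four d ψ φ q hψinj hexact hqs hkerq
    (hasPdLE_finsupp d hd) (hasPdLE_finsupp d hd) hd

end Telescope

end PdAux


/-- Let `(R, m)` be a Noetherian local domain of prime characteristic
`p`. Then for every prime ideal `P` of `R_∞`, `pd_{R_∞}(R_∞/P) ≤ 2ℓ`, where `ℓ` is the
minimal number of generators of the ideal `P ∩ R` of `R`; in particular every prime
ideal `P` of `R_∞` satisfies `pd_{R_∞}(R_∞/P) < ∞`. -/
theorem stmt_2 (R : Type u) [CommRing R] [IsDomain R] [IsNoetherianRing R]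
    [IsLocalRing R] (p : ℕ) (hp : p.Prime) [CharP R p]
    (P : Ideal (RInf R p hp)) (hP : P.IsPrime) :
    projDim (RInf R p hp) (RInf R p hp ⧸ P) ≤
      ((2 * sInf {n : ℕ | ∃ s : Finset R, s.card = n ∧
        Ideal.span (s : Set R) = P.comap (toRInf R p hp)} : ℕ) : ℕ∞) ∧
    projDim (RInf R p hp) (RInf R p hp ⧸ P) < ⊤ := by

  classical
  -- characteristic and perfectness instances
  haveI hFact : Fact p.Prime := ⟨hp⟩
  haveI hCharFrac : CharP (FractionRing R) p :=
    charP_of_injective_algebraMap (IsFractionRing.injective R (FractionRing R)) p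
  haveI hCharL : CharP (AlgebraicClosure (FractionRing R)) p :=
    charP_of_injective_algebraMap
      (algebraMap (FractionRing R) (AlgebraicClosure (FractionRing R))).injective p
  haveI hCharA : CharP (RInf R p hp) p := CharP.subring' _ p _
  haveI hExpL : ExpChar (AlgebraicClosure (FractionRing R)) p := .prime hp
  haveI hExpA : ExpChar (RInf R p hp) p := .prime hp
  haveI hPerfA : PerfectRing (RInf R p hp) p := by
    refine PerfectRing.ofSurjective _ _ ?_
    intro a
    obtain ⟨n, r, hr⟩ := a.2
    set y := (frobeniusEquiv (AlgebraicClosure (FractionRing R)) p).symm ↑a with hy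
    have hyp : y ^ p = (a : AlgebraicClosure (FractionRing R)) := by
      rw [← frobenius_def]
      exact (frobeniusEquiv _ p).apply_symm_apply _
    have hymem : y ∈ RInfSubring R p hp := by
      refine ⟨n+1, r, ?_⟩
      rw [hr, ← hyp, ← pow_mul, ← pow_succ']
    refine ⟨⟨y, hymem⟩, ?_⟩
    apply Subtype.ext
    rw [frobenius_def]
    push_cast
    exact hyp
  -- the inverse Frobenius
  set σ : RInf R p hp ≃+* RInf R p hp := (frobeniusEquiv (RInf R p hp) p).symm with hσdef
  have hσ : ∀ a : RInf R p hp, σ a ^ p = a := by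
    intro a
    rw [hσdef, ← frobenius_def]
    exact (frobeniusEquiv (RInf R p hp) p).apply_symm_apply a
  have hτsucc : ∀ (n : ℕ) (a : RInf R p hp),
      (σ ^ (n+1) : RInf R p hp ≃+* RInf R p hp) a
        = σ ((σ ^ n : RInf R p hp ≃+* RInf R p hp) a) := by
    intro n a
    rw [pow_succ']
    rfl
  have hτsucc' : ∀ (n : ℕ) (a : RInf R p hp),
      (σ ^ (n+1) : RInf R p hp ≃+* RInf R p hp) a
        = (σ ^ n : RInf R p hp ≃+* RInf R p hp) (σ a) := by
    intro n a
    rw [pow_succ]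
    rfl
  have hpowτ : ∀ (n : ℕ) (a : RInf R p hp),
      ((σ ^ n : RInf R p hp ≃+* RInf R p hp) a) ^ (p ^ n) = a := by
    intro n
    induction n with
    | zero => intro a; rw [pow_zero, pow_zero, pow_one]; rfl
    | succ n IH =>
      intro a
      rw [hτsucc' n a, pow_succ p n, pow_mul, IH (σ a)]
      exact hσ a
  have hinvτ : ∀ (n : ℕ) (a : RInf R p hp),
      (σ ^ n : RInf R p hp ≃+* RInf R p hp) (a ^ p ^ n) = a := by
    intro n a
    have h1 : ((σ ^ n : RInf R p hp ≃+* RInf R p hp) (a ^ p ^ n)) ^ p ^ n = a ^ p ^ n :=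
      hpowτ n _
    have hinj : Function.Injective (iterateFrobenius (RInf R p hp) p n) :=
      (bijective_iterateFrobenius (RInf R p hp) p n).1
    apply hinj
    rw [iterateFrobenius_def, iterateFrobenius_def]
    exact h1
  -- the ideals of p-power roots
  set vv : R → ℕ → RInf R p hp :=
    fun x e => (σ ^ e : RInf R p hp ≃+* RInf R p hp) (toRInf R p hp x) with hvv
  set N : R → Ideal (RInf R p hp) := fun x => Ideal.span (Set.range (vv x)) with hNdef
  set NL : List R → Ideal (RInf R p hp) :=
    fun l => l.foldr (fun x J => N x ⊔ J) ⊥ with hNLdef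
  have hvσ : ∀ (x : R) (e : ℕ), σ (vv x e) = vv x (e+1) := by
    intro x e
    rw [hvv]
    exact (hτsucc e _).symm
  have hstabN : ∀ (x : R), ∀ z ∈ N x, σ z ∈ N x := by
    intro x z hz
    induction hz using Submodule.span_induction with
    | mem w hw =>
      obtain ⟨e, rfl⟩ := hw
      rw [hvσ]
      exact Ideal.subset_span ⟨e+1, rfl⟩
    | zero => rw [map_zero]; exact zero_mem _
    | add u w _ _ hu hw => rw [map_add]; exact add_mem hu hw
    | smul a u _ hu =>
      rw [smul_eq_mul, map_mul]
      exact Ideal.mul_mem_left _ _ hu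
  have hstab : ∀ (l : List R), ∀ z ∈ NL l, σ z ∈ NL l := by
    intro l
    induction l with
    | nil =>
      intro z hz
      have : z = 0 := hz
      rw [this, map_zero]
      exact zero_mem _
    | cons x l IH =>
      intro z hz
      obtain ⟨a, ha, b, hb, rfl⟩ := Submodule.mem_sup.mp hz
      rw [map_add]
      exact Submodule.add_mem_sup (hstabN x a ha) (IH b hb)
  -- main induction : pd (A / NL l) ≤ 2 |l|
  have hmain : ∀ (l : List R),
      hasPdLE (RInf R p hp) (2 * l.length)
        (ModuleCat.of (RInf R p hp) (RInf R p hp ⧸ NL l)) := by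
    intro l
    induction l with
    | nil =>
      have h0 : (2 * ([] : List R).length) = 0 := by simp
      rw [h0, PdAux.hasPdLE_zero_iff]
      exact Module.Projective.of_equiv (Submodule.quotEquivOfEqBot ⊥ rfl).symm
    | cons x l IH =>
      have step := PdAux.telescope_step p hp.two_le σ hσ (vv x) (hvσ x)
        (NL l) (hstab l) (2 * l.length) IH
      have hlen : 2 * (x :: l).length = 2 * l.length + 2 := by
        simp [List.length_cons, Nat.mul_succ]
      rw [hlen]
      exact step
  -- identify P with NL of a minimal generating list
  have hQfg : (P.comap (toRInf R p hp)).FG := IsNoetherian.noetherian _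
  obtain ⟨S0, hS0⟩ := hQfg
  have hne : {n : ℕ | ∃ s : Finset R, s.card = n ∧
      Ideal.span (s : Set R) = P.comap (toRInf R p hp)}.Nonempty := ⟨S0.card, S0, rfl, hS0⟩
  obtain ⟨s, hcard, hspan⟩ := Nat.sInf_mem hne
  have hNLP : NL s.toList = P := by
    apply le_antisymm
    · have haux : ∀ (l' : List R), (∀ x ∈ l', toRInf R p hp x ∈ P) → NL l' ≤ P := by
        intro l'
        induction l' with
        | nil => intro _; exact bot_le
        | cons x l' IH =>
          intro hx
          refine sup_le ?_ (IH fun t ht => hx t (List.mem_cons_of_mem x ht))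
          rw [hNdef]
          refine Ideal.span_le.mpr ?_
          rintro _ ⟨e, rfl⟩
          refine hP.mem_of_pow_mem (p ^ e) ?_
          rw [hvv, hpowτ e]
          exact hx x List.mem_cons_self
      refine haux s.toList ?_
      intro x hx
      have hxs : x ∈ s := (Finset.mem_toList).mp hx
      have : x ∈ P.comap (toRInf R p hp) := by
        rw [← hspan]
        exact Ideal.subset_span hxs
      exact Ideal.mem_comap.mp this
    · intro y hy
      obtain ⟨n, r, hr⟩ := y.2
      have hy_pow : toRInf R p hp r = y ^ p ^ n := by
        apply Subtype.ext
        have h1 : ((toRInf R p hp r : RInf R p hp) : AlgebraicClosure (FractionRing R))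
            = algebraMap R (AlgebraicClosure (FractionRing R)) r := rfl
        rw [h1, hr]
        push_cast
        rfl
      have hrQ : r ∈ Ideal.span (s : Set R) := by
        rw [hspan, Ideal.mem_comap, hy_pow]
        exact Ideal.pow_mem_of_mem P hy _ (pow_pos hp.pos n)
      have haux2 : ∀ (l' : List R) (w : R), w ∈ l' → N w ≤ NL l' := by
        intro l'
        induction l' with
        | nil => intro w hw; exact absurd hw List.not_mem_nil
        | cons t l' IH =>
          intro w hw
          rcases List.mem_cons.mp hw with h1 | h2
          · subst h1; exact le_sup_left
          · exact le_trans (IH w h2) le_sup_right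
      have hall : ∀ r', r' ∈ Ideal.span (s : Set R) → ∀ m : ℕ,
          (σ ^ m : RInf R p hp ≃+* RInf R p hp) (toRInf R p hp r') ∈ NL s.toList := by
        intro r' hr'
        induction hr' using Submodule.span_induction with
        | mem w hw =>
          intro m
          have hwl : w ∈ s.toList := (Finset.mem_toList).mpr hw
          exact haux2 s.toList w hwl (Ideal.subset_span ⟨m, rfl⟩)
        | zero =>
          intro m
          rw [map_zero, map_zero]
          exact zero_mem _
        | add u w _ _ hu hw =>
          intro m
          rw [map_add, map_add]
          exact add_mem (hu m) (hw m)
        | smul a u _ hu =>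
          intro m
          rw [smul_eq_mul, map_mul, map_mul]
          exact Ideal.mul_mem_left _ _ (hu m)
      have hyeq : y = (σ ^ n : RInf R p hp ≃+* RInf R p hp) (toRInf R p hp r) := by
        rw [hy_pow]
        exact (hinvτ n y).symm
      rw [hyeq]
      exact hall r hrQ n
  -- conclude
  have hfinal : hasPdLE (RInf R p hp)
      (2 * sInf {n : ℕ | ∃ s : Finset R, s.card = n ∧
        Ideal.span (s : Set R) = P.comap (toRInf R p hp)})
      (ModuleCat.of (RInf R p hp) (RInf R p hp ⧸ P)) := by
    have h1 := hmain s.toList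
    rw [Finset.length_toList, hcard] at h1
    exact PdAux.hasPdLE_congr _ (Submodule.quotEquivOfEq _ _ hNLP) h1
  have hle : projDim (RInf R p hp) (RInf R p hp ⧸ P) ≤
      ((2 * sInf {n : ℕ | ∃ s : Finset R, s.card = n ∧
        Ideal.span (s : Set R) = P.comap (toRInf R p hp)} : ℕ) : ℕ∞) := by
    unfold projDim
    exact sInf_le ⟨_, rfl, hfinal⟩
  exact ⟨hle, lt_of_le_of_lt hle (WithTop.coe_lt_top _)⟩
end

section
/- Let R be an integral domain of characteristic 0 and let x be a nonzero nonunit element of R^+. Suppose (x_q)_{q ∈ ℚ_{>0}} is a family of elements of R^+ with x_1 = x and x_q · x_{q'} = x_{q+q'} for all q, q' ∈ ℚ_{>0} (a compatible system of positive rational powers of x), and let (x^∞) denote the ideal of R^+ generated by {x_{1/n} : n ∈ ℕ}. Then pd_{R^+}((x^∞)) ≤ 1. If moreover R is Noetherian, Henselian and local, then pd_{R^+}((x^∞)) = 1. -/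
set_option synthInstance.maxHeartbeats 400000
set_option maxHeartbeats 1000000

universe u

open CategoryTheory CategoryTheory.Limits

/-- The absolute integral closure `R⁺` of a domain `R`: the integral closure of `R`
inside an algebraic closure of its field of fractions. -/
abbrev RPlus (R : Type u) [CommRing R] [IsDomain R] : Type u :=
  ↥(integralClosure R (AlgebraicClosure (FractionRing R)))

section Aux

variable {A : Type u} [CommRing A] [IsDomain A]

/-- Partial products of the transition elements `t`. -/
def chainS (t : ℕ → A) : ℕ → ℕ → A
  | 0, _ => 1
  | k + 1, m => t m * chainS t k (m + 1)

theorem chainS_spec {a t : ℕ → A} (ht : ∀ n, a n = t n * a (n + 1)) :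
    ∀ k m, a m = chainS t k m * a (m + k) := by
  intro k
  induction k with
  | zero => intro m; simp [chainS]
  | succ k ih =>
    intro m
    have hidx : m + (k + 1) = (m + 1) + k := by omega
    rw [chainS, hidx, ht m, ih (m + 1)]
    ring

theorem mem_span_v (t : ℕ → A) :
    ∀ k m, (Finsupp.single m (1 : A) - chainS t k m • Finsupp.single (m + k) (1 : A)) ∈
      Submodule.span A (Set.range (fun n => Finsupp.single n (1 : A)
        - Finsupp.single (n + 1) (t n))) := by
  intro k
  induction k with
  | zero => intro m; simp [chainS]
  | succ k ih =>
    intro m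
    have h1 : (Finsupp.single m (1 : A) - chainS t (k + 1) m • Finsupp.single (m + (k + 1)) (1 : A))
        = (Finsupp.single m (1 : A) - Finsupp.single (m + 1) (t m))
          + t m • (Finsupp.single (m + 1) (1 : A)
            - chainS t k (m + 1) • Finsupp.single ((m + 1) + k) (1 : A)) := by
      have hidx : m + (k + 1) = (m + 1) + k := by omega
      rw [show (Finsupp.single (m + 1) (t m) : ℕ →₀ A) = t m • Finsupp.single (m + 1) (1 : A)
        from by rw [Finsupp.smul_single, smul_eq_mul, mul_one], chainS, hidx, smul_sub, smul_smul]
      abel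
    rw [h1]
    exact add_mem (Submodule.subset_span ⟨m, rfl⟩) (Submodule.smul_mem _ _ (ih (m + 1)))

theorem ker_le_span {a t : ℕ → A} (ha : ∀ n, a n ≠ 0) (ht : ∀ n, a n = t n * a (n + 1)) :
    ∀ c : ℕ →₀ A, Finsupp.linearCombination A a c = 0 →
      c ∈ Submodule.span A (Set.range (fun n => Finsupp.single n (1 : A)
        - Finsupp.single (n + 1) (t n))) := by
  classical
  intro c hc
  set N := c.support.sup id with hN
  have hle : ∀ m ∈ c.support, m ≤ N := fun m hm => Finset.le_sup (f := id) hm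
  have key : (∑ m ∈ c.support, c m * chainS t (N - m) m) * a N = 0 := by
    rw [Finset.sum_mul, ← hc, Finsupp.linearCombination_apply, Finsupp.sum]
    apply Finset.sum_congr rfl
    intro m hm
    have hmle := hle m hm
    have hidx : m + (N - m) = N := by omega
    calc c m * chainS t (N - m) m * a N
        = c m * (chainS t (N - m) m * a (m + (N - m))) := by rw [hidx]; ring
      _ = c m * a m := by rw [← chainS_spec ht]
      _ = c m • a m := by rw [smul_eq_mul]
  have hσ : (∑ m ∈ c.support, c m * chainS t (N - m) m) = 0 := by
    rcases mul_eq_zero.mp key with h | h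
    · exact h
    · exact absurd h (ha N)
  have hc2 : c = ∑ m ∈ c.support,
      c m • (Finsupp.single m (1 : A) - chainS t (N - m) m • Finsupp.single N (1 : A)) := by
    simp only [smul_sub, Finset.sum_sub_distrib, smul_smul]
    rw [← Finset.sum_smul, hσ, zero_smul, sub_zero]
    conv_lhs => rw [← Finsupp.sum_single c, Finsupp.sum]
    apply Finset.sum_congr rfl
    intro m _
    rw [Finsupp.smul_single, smul_eq_mul, mul_one]
  rw [hc2]
  apply Submodule.sum_mem
  intro m hm
  apply Submodule.smul_mem
  have h := mem_span_v t (N - m) m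
  rwa [show m + (N - m) = N from by have := hle m hm; omega] at h

theorem free_kernel_chain {a t : ℕ → A} (ha : ∀ n, a n ≠ 0)
    (ht : ∀ n, a n = t n * a (n + 1)) :
    Module.Free A ↥(LinearMap.ker (Finsupp.linearCombination A a)) ∧
      LinearMap.range (Finsupp.linearCombination A a) = Ideal.span (Set.range a) := by
  classical
  set f : (ℕ →₀ A) →ₗ[A] A := Finsupp.linearCombination A a with hf
  set v : ℕ → (ℕ →₀ A) := fun n => Finsupp.single n (1 : A) - Finsupp.single (n + 1) (t n)
    with hv
  set g : (ℕ →₀ A) →ₗ[A] (ℕ →₀ A) := Finsupp.linearCombination A v with hg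
  set h : (ℕ →₀ A) →ₗ[A] (ℕ →₀ A) :=
    Finsupp.linearCombination A (fun n => Finsupp.single (n + 1) (t n)) with hh
  have hg_eq : ∀ c, g c = c - h c := by
    have : g = LinearMap.id - h := by
      apply Finsupp.lhom_ext
      intro n r
      simp only [hg, hh, hv, Finsupp.linearCombination_single, LinearMap.sub_apply,
        LinearMap.id_apply, smul_sub, Finsupp.smul_single, smul_eq_mul, mul_one]
    intro c
    rw [this, LinearMap.sub_apply, LinearMap.id_apply]
  have hh0 : ∀ c : ℕ →₀ A, (h c) 0 = 0 := by
    intro c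
    rw [hh, Finsupp.linearCombination_apply, Finsupp.sum_apply, Finsupp.sum]
    apply Finset.sum_eq_zero
    intro n _
    rw [Finsupp.smul_single, Finsupp.single_apply]
    simp
  have hhsucc : ∀ (c : ℕ →₀ A) (m : ℕ), (h c) (m + 1) = t m * c m := by
    intro c m
    rw [hh, Finsupp.linearCombination_apply, Finsupp.sum_apply, Finsupp.sum]
    have : ∀ n ∈ c.support,
        (c n • Finsupp.single (n + 1) (t n)) (m + 1) = if n = m then c n * t n else 0 := by
      intro n _
      rw [Finsupp.smul_single, Finsupp.single_apply, smul_eq_mul]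
      by_cases hnm : n = m
      · subst hnm; simp
      · have : ¬ (n + 1 = m + 1) := by omega
        simp [this, hnm]
    rw [Finset.sum_congr rfl this, Finset.sum_ite_eq' c.support m (fun n => c n * t n)]
    by_cases hm : m ∈ c.support
    · rw [if_pos hm]; ring
    · rw [if_neg hm, Finsupp.notMem_support_iff.mp hm]; ring
  have hginj : Function.Injective g := by
    rw [injective_iff_map_eq_zero]
    intro c hcz
    have hcoord : ∀ m, c m = 0 := by
      intro m
      induction m with
      | zero =>
        have := DFunLike.congr_fun hcz 0
        rw [hg_eq, Finsupp.sub_apply, hh0, sub_zero] at this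
        simpa using this
      | succ m ih =>
        have := DFunLike.congr_fun hcz (m + 1)
        rw [hg_eq, Finsupp.sub_apply, hhsucc] at this
        simp only [Finsupp.coe_zero, Pi.zero_apply] at this
        rw [ih, mul_zero, sub_zero] at this
        exact this
    ext m
    exact hcoord m
  have hrg : LinearMap.range g = LinearMap.ker f := by
    apply le_antisymm
    · rw [hg, Finsupp.range_linearCombination, Submodule.span_le]
      rintro _ ⟨n, rfl⟩
      rw [SetLike.mem_coe, LinearMap.mem_ker, hv]
      simp only [map_sub, hf, Finsupp.linearCombination_single, smul_eq_mul, one_mul]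
      rw [← ht n, sub_self]
    · intro c hc
      rw [hg, Finsupp.range_linearCombination]
      exact ker_le_span ha ht c (LinearMap.mem_ker.mp hc)
  constructor
  · have e : (ℕ →₀ A) ≃ₗ[A] ↥(LinearMap.ker f) :=
      (LinearEquiv.ofInjective g hginj).trans (LinearEquiv.ofEq _ _ hrg)
    exact Module.Free.of_equiv e
  · rw [hf, Finsupp.range_linearCombination, Ideal.submodule_span_eq]

/-- The key homological lemma: the ideal generated by a divisibility chain has a
length-one free resolution. -/
theorem hasPdLE_one_of_chain (a t : ℕ → A) (ha : ∀ n, a n ≠ 0)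
    (ht : ∀ n, a n = t n * a (n + 1)) :
    hasPdLE A 1 (ModuleCat.of A ↥(Ideal.span (Set.range a))) := by
  classical
  obtain ⟨hfree, hrange⟩ := free_kernel_chain ha ht
  set I : Ideal A := Ideal.span (Set.range a) with hI
  set f : (ℕ →₀ A) →ₗ[A] A := Finsupp.linearCombination A a with hf
  have hmem : ∀ c, f c ∈ I := by
    intro c
    rw [← hrange]
    exact LinearMap.mem_range_self f c
  set f' : (ℕ →₀ A) →ₗ[A] ↥I := LinearMap.codRestrict (I : Submodule A A) f hmem with hf'
  have hsurj : Function.Surjective f' := by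
    rintro ⟨y, hy⟩
    rw [← hrange] at hy
    obtain ⟨c, hc⟩ := hy
    exact ⟨c, Subtype.ext hc⟩
  refine ⟨ModuleCat.of A (ℕ →₀ A),
    ModuleCat.ofHom (X := ℕ →₀ A) (Y := ↥I) f', ?_, ?_, ?_⟩
  · rw [ModuleCat.epi_iff_surjective]
    exact hsurj
  · exact ModuleCat.projective_of_free (Finsupp.basisSingleOne (R := A) (ι := ℕ))
  · show Projective _
    have hker : LinearMap.ker (ModuleCat.ofHom (X := ℕ →₀ A) (Y := ↥I) f').hom =
        LinearMap.ker f := LinearMap.ker_codRestrict _ _ _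
    have : Module.Free A
        ↥(LinearMap.ker (ModuleCat.ofHom (X := ℕ →₀ A) (Y := ↥I) f').hom) := by
      rw [hker]; exact hfree
    have hproj : Projective (ModuleCat.of A
        ↥(LinearMap.ker (ModuleCat.ofHom (X := ℕ →₀ A) (Y := ↥I) f').hom)) :=
      (IsProjective.iff_projective _).mp inferInstance
    exact Projective.of_iso (ModuleCat.kernelIsoKer _).symm hproj

/-- The non-projectivity lemma: if the chain ideal is not contained in any of the
principal ideals `(a N)`, then it is not a projective module. -/
theorem not_projective_of_chain (a t : ℕ → A) (ha : ∀ n, a n ≠ 0)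
    (ht : ∀ n, a n = t n * a (n + 1))
    (hnot : ∀ N, ¬ (Ideal.span (Set.range a) ≤ Ideal.span {a N})) :
    ¬ Module.Projective A ↥(Ideal.span (Set.range a)) := by
  classical
  intro hproj
  set I : Ideal A := Ideal.span (Set.range a) with hI
  obtain ⟨s, hs⟩ := hproj.out
  have hsym : ∀ (w w' : ↥I) (z : ↥I), (w : A) * (s w') z = (w' : A) * (s w) z := by
    intro w w' z
    have hsw : (w : A) • w' = (w' : A) • w := by
      apply Subtype.ext
      show (w : A) * (w' : A) = (w' : A) * (w : A)
      ring
    have := congrArg (fun u => (s u) z) hsw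
    simpa [map_smul, Finsupp.smul_apply, smul_eq_mul] using this
  have hy0 : a 0 ∈ I := Submodule.subset_span ⟨0, rfl⟩
  set y : ↥I := ⟨a 0, hy0⟩ with hy
  have hsupp : ∀ w : ↥I, (s w).support ⊆ (s y).support := by
    intro w z hz
    rw [Finsupp.mem_support_iff] at hz ⊢
    intro hzy
    have h1 := hsym y w z
    rw [hzy, mul_zero] at h1
    rcases mul_eq_zero.mp h1 with h | h
    · exact (ha 0) h
    · exact hz h
  have hmono : ∀ {n m : ℕ}, n ≤ m → Ideal.span {a n} ≤ Ideal.span {a m} := by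
    intro n m hnm
    rw [Ideal.span_singleton_le_span_singleton]
    have hcs := chainS_spec ht (m - n) n
    rw [show n + (m - n) = m from by omega] at hcs
    exact ⟨chainS t (m - n) n, by rw [mul_comm]; exact hcs⟩
  have hdir : ∀ b ∈ I, ∃ n, b ∈ Ideal.span {a n} := by
    intro b hb
    induction hb using Submodule.span_induction with
    | mem b hb =>
      obtain ⟨n, rfl⟩ := hb
      exact ⟨n, Ideal.subset_span rfl⟩
    | zero => exact ⟨0, zero_mem _⟩
    | add b b' _ _ hb hb' =>
      obtain ⟨n, hn⟩ := hb
      obtain ⟨n', hn'⟩ := hb'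
      exact ⟨max n n', add_mem (hmono (le_max_left n n') hn) (hmono (le_max_right n n') hn')⟩
    | smul r b _ hb =>
      obtain ⟨n, hn⟩ := hb
      exact ⟨n, Submodule.smul_mem _ _ hn⟩
  have hfin : ∀ T : Finset ↥I, ∃ N, ∀ z ∈ T, (z : A) ∈ Ideal.span {a N} := by
    intro T
    induction T using Finset.induction with
    | empty => exact ⟨0, by simp⟩
    | insert z T hzT ih =>
      obtain ⟨N, hN⟩ := ih
      obtain ⟨n, hn⟩ := hdir (z : A) z.2
      refine ⟨max n N, ?_⟩
      intro w hw
      rcases Finset.mem_insert.mp hw with rfl | hw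
      · exact hmono (le_max_left n N) hn
      · exact hmono (le_max_right n N) (hN w hw)
  obtain ⟨N, hN⟩ := hfin (s y).support
  apply hnot N
  intro b hb
  have hb' : (⟨b, hb⟩ : ↥I) = Finsupp.linearCombination A id (s ⟨b, hb⟩) := (hs _).symm
  have : b = ((Finsupp.linearCombination A id (s ⟨b, hb⟩) : ↥I) : A) :=
    congrArg Subtype.val hb'
  have hcoe : ((∑ z ∈ (s ⟨b, hb⟩).support, (s ⟨b, hb⟩) z • id z : ↥I) : A)
      = ∑ z ∈ (s ⟨b, hb⟩).support, (s ⟨b, hb⟩) z • ((z : ↥I) : A) := by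
    rw [AddSubmonoidClass.coe_finset_sum]
    apply Finset.sum_congr rfl
    intro z _
    simp
  rw [this, Finsupp.linearCombination_apply, Finsupp.sum, hcoe]
  apply Submodule.sum_mem
  intro z hz
  exact Submodule.smul_mem _ _ (hN z (hsupp _ hz))

/-- Combining the two previous lemmas: the projective dimension of a chain ideal
is exactly one. -/
theorem projDim_chain (a t : ℕ → A) (ha : ∀ n, a n ≠ 0)
    (ht : ∀ n, a n = t n * a (n + 1))
    (hnot : ∀ N, ¬ (Ideal.span (Set.range a) ≤ Ideal.span {a N})) :
    projDim A ↥(Ideal.span (Set.range a)) = 1 := by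
  have hpd : hasPdLE A 1 (ModuleCat.of A ↥(Ideal.span (Set.range a))) :=
    hasPdLE_one_of_chain a t ha ht
  have hnp : ¬ Module.Projective A ↥(Ideal.span (Set.range a)) :=
    not_projective_of_chain a t ha ht hnot
  have hle1 : projDim A ↥(Ideal.span (Set.range a)) ≤ 1 := by
    apply sInf_le
    exact ⟨1, by norm_num, hpd⟩
  apply le_antisymm hle1
  apply le_sInf
  rintro b ⟨k, rfl, hk⟩
  cases k with
  | zero =>
    exact (hnp ((IsProjective.iff_projective _).mpr hk)).elim
  | succ k =>
    exact_mod_cast Nat.succ_le_succ (Nat.zero_le k)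

end Aux

/-- Let `R` be an integral domain of characteristic `0` and let `x` be
a nonzero nonunit element of `R⁺`. Given a compatible system `(x_q)_{q ∈ ℚ_{>0}}` of
positive rational powers of `x` (with `x_1 = x` and `x_q · x_{q'} = x_{q+q'}`), let
`(x^∞)` be the ideal of `R⁺` generated by `{x_{1/n} : n ∈ ℕ}`. Then
`pd_{R⁺}((x^∞)) ≤ 1`, with equality if moreover `R` is Noetherian, Henselian local. -/
theorem stmt_9 (R : Type u) [CommRing R] [IsDomain R] [CharZero R]
    (x : RPlus R) (hx0 : x ≠ 0) (hxu : ¬IsUnit x)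
    (xq : ℚ → RPlus R) (hx1 : xq 1 = x)
    (hmul : ∀ q q' : ℚ, 0 < q → 0 < q' → xq q * xq q' = xq (q + q')) :
    projDim (RPlus R)
      ↥(Ideal.span {y : RPlus R | ∃ n : ℕ, 0 < n ∧ y = xq (1 / (n : ℚ))}) ≤ 1 ∧
    (IsNoetherianRing R → HenselianLocalRing R →
      projDim (RPlus R)
        ↥(Ideal.span {y : RPlus R | ∃ n : ℕ, 0 < n ∧ y = xq (1 / (n : ℚ))}) = 1) := by
  classical
  set a : ℕ → RPlus R := fun n => xq (1 / ((n : ℚ) + 1)) with ha_def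
  have hset : {y : RPlus R | ∃ n : ℕ, 0 < n ∧ y = xq (1 / (n : ℚ))} = Set.range a := by
    ext y
    constructor
    · rintro ⟨n, hn, rfl⟩
      refine ⟨n - 1, ?_⟩
      have : ((n - 1 : ℕ) : ℚ) + 1 = (n : ℚ) := by
        have h1 : (1 : ℕ) ≤ n := hn
        push_cast [Nat.cast_sub h1]
        ring
      rw [ha_def]
      simp only [this]
    · rintro ⟨n, rfl⟩
      refine ⟨n + 1, Nat.succ_pos n, ?_⟩
      rw [ha_def]
      push_cast
      ring_nf
  have hpow : ∀ (k : ℕ) (q : ℚ), 0 < q → xq q ^ (k + 1) = xq (((k : ℚ) + 1) * q) := by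
    intro k
    induction k with
    | zero => intro q hq; simp
    | succ k ih =>
      intro q hq
      have hk : (0 : ℚ) < ((k : ℚ) + 1) * q := by positivity
      calc xq q ^ (k + 2) = xq q ^ (k + 1) * xq q := by ring
        _ = xq (((k : ℚ) + 1) * q) * xq q := by rw [ih q hq]
        _ = xq (((k : ℚ) + 1) * q + q) := hmul _ _ hk hq
        _ = xq ((((k + 1 : ℕ) : ℚ) + 1) * q) := by congr 1; push_cast; ring
  have hxpow : ∀ n : ℕ, a n ^ (n + 1) = x := by
    intro n
    have hq : (0 : ℚ) < 1 / ((n : ℚ) + 1) := by positivity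
    rw [ha_def]
    rw [hpow n _ hq, show ((n : ℚ) + 1) * (1 / ((n : ℚ) + 1)) = 1 from by field_simp]
    exact hx1
  have ha0 : ∀ n, a n ≠ 0 := by
    intro n h
    apply hx0
    rw [← hxpow n, h, zero_pow (Nat.succ_ne_zero n)]
  set t : ℕ → RPlus R := fun n => xq (1 / ((n : ℚ) + 1) - 1 / ((n : ℚ) + 2)) with ht_def
  have ht : ∀ n, a n = t n * a (n + 1) := by
    intro n
    have h2 : (0 : ℚ) < 1 / ((n : ℚ) + 2) := by positivity
    have hd : (0 : ℚ) < 1 / ((n : ℚ) + 1) - 1 / ((n : ℚ) + 2) := by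
      rw [sub_pos]
      apply one_div_lt_one_div_of_lt
      · positivity
      · linarith
    have hcast : ((n + 1 : ℕ) : ℚ) + 1 = (n : ℚ) + 2 := by push_cast; ring
    rw [ha_def, ht_def]
    simp only [hcast]
    rw [hmul _ _ hd h2]
    congr 1
    ring
  have hnot : ∀ N, ¬ (Ideal.span (Set.range a) ≤ Ideal.span {a N}) := by
    intro N hle
    have hmem : a (2 * N + 1) ∈ Ideal.span {a N} :=
      hle (Submodule.subset_span ⟨2 * N + 1, rfl⟩)
    obtain ⟨r, hr⟩ := Ideal.mem_span_singleton.mp hmem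
    have hsq : a N = a (2 * N + 1) * a (2 * N + 1) := by
      have hc : ((2 * N + 1 : ℕ) : ℚ) + 1 = 2 * ((N : ℚ) + 1) := by push_cast; ring
      have hq : (0 : ℚ) < 1 / (2 * ((N : ℚ) + 1)) := by positivity
      rw [ha_def]
      simp only [hc]
      rw [hmul _ _ hq hq]
      congr 1
      have hN1 : ((N : ℚ) + 1) ≠ 0 := by positivity
      field_simp
      ring
    have hz : a (2 * N + 1) * (1 - r * a (2 * N + 1)) = 0 := by
      calc a (2 * N + 1) * (1 - r * a (2 * N + 1))
          = a (2 * N + 1) - r * (a (2 * N + 1) * a (2 * N + 1)) := by ring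
        _ = a (2 * N + 1) - r * a N := by rw [← hsq]
        _ = 0 := by rw [hr]; ring
    rcases mul_eq_zero.mp hz with h | h
    · exact ha0 _ h
    · have h1 : a (2 * N + 1) * r = 1 := by
        have h2 := sub_eq_zero.mp h
        rw [mul_comm]
        exact h2.symm
      have hu : IsUnit (a (2 * N + 1)) := IsUnit.of_mul_eq_one _ h1
      exact hxu (hxpow (2 * N + 1) ▸ hu.pow (2 * N + 1 + 1))
  have key : projDim (RPlus R) ↥(Ideal.span (Set.range a)) = 1 :=
    projDim_chain a t ha0 ht hnot
  rw [hset]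
  exact ⟨le_of_eq key, fun _ _ => key⟩
end

section
/- Let R be a Noetherian domain of Krull dimension at least 2. Then the intersection of all nonzero prime ideals of R^+ is the zero ideal. -/
set_option synthInstance.maxHeartbeats 400000
set_option maxHeartbeats 1000000

universe u

/-- A finite module killed by a maximal ideal is Artinian. -/
lemma aux_artinian_of_killed {R : Type*} [CommRing R] {M : Type*} [AddCommGroup M] [Module R M]
    [Module.Finite R M] (m : Ideal R) (hm : m.IsMaximal)
    (h : ∀ a ∈ m, ∀ x : M, a • x = (0 : M)) : IsArtinian R M := by
  have hss : IsSemisimpleModule R M := by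
    apply IsSemisimpleModule.of_sSup_simples_eq_top
    rw [eq_top_iff]
    intro x _
    by_cases hx : x = 0
    · simp [hx]
    · have htor : Ideal.torsionOf R M x = m := by
        refine (hm.eq_of_le ?_ ?_).symm
        · rw [Ne, Ideal.torsionOf_eq_top_iff]; exact hx
        · intro a ha; exact (Ideal.mem_torsionOf_iff x a).mpr (h a ha x)
      have hsimp : IsSimpleModule R (R ⧸ Ideal.torsionOf R M x) := by
        rw [isSimpleModule_iff_isCoatom, htor]; exact Ideal.isMaximal_def.mp hm
      have hsimp2 : IsSimpleModule R (R ∙ x) :=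
        IsSimpleModule.congr (Ideal.quotTorsionOfEquivSpanSingleton R M x).symm
      exact (le_sSup (show (R ∙ x) ∈ _ from hsimp2))
        (Submodule.mem_span_singleton_self x)
  infer_instance

/-- In a Noetherian local ring, `A ⧸ m^k` is an Artinian module. -/
lemma aux_artinian_quotient_pow {A : Type*} [CommRing A] [IsNoetherianRing A] [IsLocalRing A]
    (k : ℕ) : IsArtinian A (A ⧸ (IsLocalRing.maximalIdeal A ^ k : Ideal A)) := by
  induction k with
  | zero =>
      have : Subsingleton (A ⧸ (IsLocalRing.maximalIdeal A ^ 0 : Ideal A)) := by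
        rw [pow_zero, Ideal.one_eq_top]
        exact Submodule.Quotient.subsingleton_iff.mpr rfl
      infer_instance
  | succ k ih =>
      set m : Ideal A := IsLocalRing.maximalIdeal A with hm
      have hIJ : m ^ (k + 1) ≤ m ^ k := Ideal.pow_le_pow_right (Nat.le_succ k)
      set g : (A ⧸ (m ^ (k+1) : Ideal A)) →ₗ[A] (A ⧸ (m ^ k : Ideal A)) :=
        Submodule.mapQ _ _ LinearMap.id hIJ with hg
      have hker : ∀ y : A, (Submodule.Quotient.mk y : A ⧸ (m ^ (k+1) : Ideal A)) ∈
          LinearMap.ker g ↔ y ∈ m ^ k := by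
        intro y
        rw [LinearMap.mem_ker, hg, Submodule.mapQ_apply, LinearMap.id_apply,
          Submodule.Quotient.mk_eq_zero]
      have hart : IsArtinian A (LinearMap.ker g) := by
        apply aux_artinian_of_killed m (IsLocalRing.maximalIdeal.isMaximal A)
        · intro a ha x
          obtain ⟨⟨x, hx⟩, rfl⟩ : ∃ z : LinearMap.ker g, z = x := ⟨x, rfl⟩
          apply Subtype.ext
          obtain ⟨y, rfl⟩ := Submodule.Quotient.mk_surjective _ x
          show a • (Submodule.Quotient.mk y : A ⧸ (m ^ (k+1) : Ideal A)) = 0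
          rw [← Submodule.Quotient.mk_smul, Submodule.Quotient.mk_eq_zero]
          have hy : y ∈ m ^ k := (hker y).mp hx
          have : a • y = y * a := by rw [smul_eq_mul, mul_comm]
          rw [this, pow_succ]
          exact Ideal.mul_mem_mul hy ha
      exact isArtinian_of_range_eq_ker (LinearMap.ker g).subtype g (Submodule.range_subtype _)

/-- Core case of Krull's principal ideal theorem: in a Noetherian local domain whose maximal
ideal is the radical of a principal ideal, every strictly smaller prime is zero. -/
lemma aux_pit {A : Type u} [CommRing A] [IsDomain A] [IsNoetherianRing A] [IsLocalRing A]
    {x : A} (hx : (Ideal.span {x}).radical = IsLocalRing.maximalIdeal A)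
    {q : Ideal A} (hq : q.IsPrime) (hqm : q < IsLocalRing.maximalIdeal A) : q = ⊥ := by
  set m : Ideal A := IsLocalRing.maximalIdeal A with hmdef
  -- x ∉ q
  have hxq : x ∉ q := by
    intro hmem
    have h1 : Ideal.span {x} ≤ q := by rwa [Ideal.span_le, Set.singleton_subset_iff]
    have h2 : m ≤ q := by
      rw [← hx, ← hq.radical]
      exact Ideal.radical_mono h1
    exact (not_le_of_gt hqm) h2
  have hxm : x ∈ m := by
    rw [← hx]
    exact Ideal.le_radical (Ideal.mem_span_singleton_self x)
  -- m ^ k ≤ span {x}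
  obtain ⟨k, hk⟩ : ∃ k : ℕ, m ^ k ≤ Ideal.span {x} := by
    obtain ⟨n, hn⟩ := Ideal.exists_radical_pow_le_of_fg (Ideal.span {x})
      (IsNoetherian.noetherian _)
    exact ⟨n, by rwa [hx] at hn⟩
  -- the localization at q
  set Aq := Localization q.primeCompl with hAq
  have h0 : (0 : A) ∉ q.primeCompl := fun h => h q.zero_mem
  have hle : q.primeCompl ≤ nonZeroDivisors A := le_nonZeroDivisors_of_noZeroDivisors h0
  haveI : IsDomain Aq := IsLocalization.isDomain_localization hle
  haveI : IsNoetherianRing Aq := IsLocalization.isNoetherianRing q.primeCompl Aq inferInstance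
  set φ := algebraMap A Aq with hφ
  have hinj : Function.Injective φ := IsLocalization.injective Aq hle
  set Q : ℕ → Ideal A := fun n => ((q.map φ) ^ n).comap φ with hQ
  have hQanti : ∀ {a b : ℕ}, a ≤ b → Q b ≤ Q a := fun h =>
    Ideal.comap_mono (Ideal.pow_le_pow_right h)
  set C : ℕ → Ideal A := fun n => Q n ⊔ Ideal.span {x} with hC
  have hCanti : ∀ {a b : ℕ}, a ≤ b → C b ≤ C a := fun h =>
    sup_le_sup_right (hQanti h) _
  have hmkC : ∀ n, m ^ k ≤ C n := fun n => hk.trans le_sup_right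
  -- stabilization via Artinianness of A ⧸ m ^ k
  haveI := aux_artinian_quotient_pow (A := A) k
  obtain ⟨n, hn⟩ := IsArtinian.monotone_stabilizes
    (⟨fun n => Submodule.map (m ^ k : Ideal A).mkQ (C n : Submodule A A),
      fun a b h => Submodule.map_mono (hCanti h)⟩ :
      ℕ →o (Submodule A (A ⧸ (m ^ k : Ideal A)))ᵒᵈ)
  have hCeq : C n = C (n + 1) := by
    have h1 : Submodule.map (m ^ k : Ideal A).mkQ (C n : Submodule A A)
        = Submodule.map (m ^ k : Ideal A).mkQ (C (n+1) : Submodule A A) :=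
      hn (n+1) (Nat.le_succ n)
    have h2 := congrArg (Submodule.comap (m ^ k : Ideal A).mkQ) h1
    simpa only [Submodule.comap_map_mkQ, sup_eq_right.mpr (hmkC n),
      sup_eq_right.mpr (hmkC (n+1))] using h2
  -- Q n ≤ Q (n+1) ⊔ m • Q n
  have hstep : (Q n : Submodule A A) ≤ (Q (n+1) : Submodule A A) ⊔ m • (Q n : Submodule A A) := by
    intro y hy
    have hyC : y ∈ C (n + 1) := by rw [← hCeq]; exact le_sup_left (α := Ideal A) hy
    obtain ⟨z, hz, w, hw, rfl⟩ := Submodule.mem_sup.mp hyC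
    obtain ⟨c, rfl⟩ := Ideal.mem_span_singleton'.mp hw
    have hcx : c * x ∈ Q n := by
      have : (z + c * x) - z ∈ Q n := Ideal.sub_mem _ hy (hQanti (Nat.le_succ n) hz)
      simpa using this
    have hc : c ∈ Q n := by
      have hu : IsUnit (φ x) := IsLocalization.map_units (M := q.primeCompl) Aq ⟨x, (hxq : x ∈ q.primeCompl)⟩
      have : φ x * φ c ∈ (q.map φ) ^ n := by
        rw [← map_mul, mul_comm]
        exact hcx
      exact (Ideal.unit_mul_mem_iff_mem _ hu).mp this
    refine Submodule.add_mem _ (Submodule.mem_sup_left hz) (Submodule.mem_sup_right ?_)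
    rw [mul_comm, smul_eq_mul]
    exact Ideal.mul_mem_mul hxm hc
  -- Nakayama in A
  have hmjac : m ≤ Ideal.jacobson ⊥ := by
    rw [IsLocalRing.jacobson_eq_maximalIdeal ⊥ bot_ne_top]
  have hQle : Q n ≤ Q (n + 1) :=
    Submodule.le_of_le_smul_of_le_jacobson_bot (IsNoetherian.noetherian _) hmjac hstep
  -- transfer to Aq
  have hmapn : ∀ j : ℕ, (Q j).map φ = (q.map φ) ^ j := fun j =>
    IsLocalization.map_comap q.primeCompl Aq _
  have hpow : (q.map φ) ^ n ≤ (q.map φ) ^ (n + 1) := by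
    rw [← hmapn n, ← hmapn (n+1)]
    exact Ideal.map_mono hQle
  have hsmul : ((q.map φ) ^ n : Submodule Aq Aq) ≤ (q.map φ) • ((q.map φ) ^ n : Submodule Aq Aq) := by
    rw [smul_eq_mul, ← pow_succ']
    exact hpow
  haveI : IsLocalRing Aq := Localization.AtPrime.isLocalRing q
  have hjac2 : q.map φ ≤ Ideal.jacobson ⊥ := by
    rw [IsLocalRing.jacobson_eq_maximalIdeal ⊥ bot_ne_top,
      ← Localization.AtPrime.map_eq_maximalIdeal]
  have hbot : (q.map φ) ^ n = ⊥ :=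
    Submodule.eq_bot_of_le_smul_of_le_jacobson_bot _ _ (IsNoetherian.noetherian _) hsmul hjac2
  -- conclude q = ⊥
  rcases Nat.eq_zero_or_pos n with hn0 | hn0
  · exfalso
    rw [hn0, pow_zero, Ideal.one_eq_top] at hbot
    have h1 : (1 : Aq) ∈ (⊥ : Ideal Aq) := hbot ▸ Submodule.mem_top
    rw [Ideal.mem_bot] at h1
    exact one_ne_zero h1
  · apply (Submodule.eq_bot_iff q).mpr
    intro y hy
    have h1 : φ y ^ n ∈ (q.map φ) ^ n := Ideal.pow_mem_pow (Ideal.mem_map_of_mem φ hy) n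
    rw [hbot, Ideal.mem_bot] at h1
    have h2 : φ y = 0 := pow_eq_zero_iff hn0.ne' |>.mp h1
    have h3 := hinj (by rw [h2, map_zero] : φ y = φ 0)
    simpa using h3

/-- Krull's principal ideal theorem packaged for our use: if `P` is a minimal prime over a
principal ideal `span {b}` in a Noetherian domain, then there is no prime strictly between
`⊥` and `P`. -/
lemma aux_pit' {B : Type u} [CommRing B] [IsDomain B] [IsNoetherianRing B]
    {b : B} {P : Ideal B} (hP : P ∈ (Ideal.span {b}).minimalPrimes)
    {q : Ideal B} (hq : q.IsPrime) (hqP : q < P) : q = ⊥ := by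
  have hPprime : P.IsPrime := hP.1.1
  have hbP : b ∈ P := hP.1.2 (Ideal.mem_span_singleton_self b)
  -- localize at P
  set A := Localization P.primeCompl with hA
  have h0 : (0 : B) ∉ P.primeCompl := fun h => h P.zero_mem
  have hle : P.primeCompl ≤ nonZeroDivisors B := le_nonZeroDivisors_of_noZeroDivisors h0
  haveI : IsDomain A := IsLocalization.isDomain_localization hle
  haveI : IsNoetherianRing A := IsLocalization.isNoetherianRing P.primeCompl A inferInstance
  haveI : IsLocalRing A := Localization.AtPrime.isLocalRing P
  set ψ := algebraMap B A with hψ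
  have hinj : Function.Injective ψ := IsLocalization.injective A hle
  have hmapm : P.map ψ = IsLocalRing.maximalIdeal A := Localization.AtPrime.map_eq_maximalIdeal
  -- the radical of span {ψ b} is the maximal ideal
  have hrad : (Ideal.span {ψ b}).radical = IsLocalRing.maximalIdeal A := by
    have hmem : ψ b ∈ IsLocalRing.maximalIdeal A := by
      rw [← hmapm]; exact Ideal.mem_map_of_mem ψ hbP
    have hallprime : ∀ J : Ideal A, Ideal.span {ψ b} ≤ J → J.IsPrime →
        J = IsLocalRing.maximalIdeal A := by
      intro J hJle hJprime
      have hrprime : (J.comap ψ).IsPrime := hJprime.comap ψ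
      have hble : b ∈ J.comap ψ := Ideal.mem_comap.mpr (hJle (Ideal.mem_span_singleton_self _))
      have hrleP : J.comap ψ ≤ P := by
        have := Ideal.comap_mono (f := ψ) (IsLocalRing.le_maximalIdeal hJprime.ne_top)
        exact this.trans Localization.AtPrime.comap_maximalIdeal.le
      have hPler : P ≤ J.comap ψ := hP.2
        ⟨hrprime, by rwa [Ideal.span_le, Set.singleton_subset_iff]⟩ hrleP
      have hcomap : J.comap ψ = P := le_antisymm hrleP hPler
      have h2 := IsLocalization.map_comap P.primeCompl A J
      change Ideal.map ψ (J.comap ψ) = J at h2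
      rw [← h2, hcomap, hmapm]
    apply le_antisymm
    · rw [Ideal.radical_eq_sInf]
      exact sInf_le ⟨by rwa [Ideal.span_le, Set.singleton_subset_iff],
        IsLocalRing.maximalIdeal.isMaximal A |>.isPrime⟩
    · rw [Ideal.radical_eq_sInf]
      apply le_sInf
      rintro J ⟨hJle, hJprime⟩
      rw [← hallprime J hJle hJprime]
  -- apply the local PIT to the image of q
  have hdisj : Disjoint (P.primeCompl : Set B) (q : Set B) := by
    rw [Set.disjoint_left]
    intro z hz hzq
    exact hz (hqP.le hzq)
  have hq' : (q.map ψ).IsPrime := IsLocalization.isPrime_of_isPrime_disjoint P.primeCompl A q hq hdisj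
  have hcomapq : (q.map ψ).comap ψ = q :=
    IsLocalization.comap_map_of_isPrime_disjoint P.primeCompl A hq hdisj
  have hlt : q.map ψ < IsLocalRing.maximalIdeal A := by
    refine lt_of_le_of_ne (IsLocalRing.le_maximalIdeal hq'.ne_top) ?_
    intro h
    have : q = P := by
      rw [← hcomapq, h]
      exact Localization.AtPrime.comap_maximalIdeal
    exact (ne_of_lt hqP) this
  have := aux_pit hrad hq' hlt
  rw [this, Ideal.comap_bot_of_injective ψ hinj] at hcomapq
  exact hcomapq.symm

/-- A Noetherian domain admitting a chain `⊥ < p₁ < p₂` of primes is not a G-domain: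
every nonzero element avoids some nonzero prime. -/
lemma aux_exists_prime_not_mem {B : Type u} [CommRing B] [IsDomain B] [IsNoetherianRing B]
    {p₁ p₂ : Ideal B} (hp₁ : p₁.IsPrime) (hp₂ : p₂.IsPrime) (h1 : p₁ ≠ ⊥) (h12 : p₁ < p₂)
    {a : B} (ha : a ≠ 0) : ∃ p : Ideal B, p.IsPrime ∧ p ≠ ⊥ ∧ a ∉ p := by
  by_contra hcon
  push_neg at hcon
  have hall : ∀ p : Ideal B, p.IsPrime → p ≠ ⊥ → a ∈ p := fun p h h' => hcon p h h'
  -- pass to the localization at p₂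
  set A := Localization p₂.primeCompl with hA
  have h0 : (0 : B) ∉ p₂.primeCompl := fun h => h p₂.zero_mem
  have hle : p₂.primeCompl ≤ nonZeroDivisors B := le_nonZeroDivisors_of_noZeroDivisors h0
  haveI : IsDomain A := IsLocalization.isDomain_localization hle
  haveI : IsNoetherianRing A := IsLocalization.isNoetherianRing p₂.primeCompl A inferInstance
  haveI : IsLocalRing A := Localization.AtPrime.isLocalRing p₂
  set φ := algebraMap B A with hφ
  have hinj : Function.Injective φ := IsLocalization.injective A hle
  set m : Ideal A := IsLocalRing.maximalIdeal A with hm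
  have hmapm : p₂.map φ = m := Localization.AtPrime.map_eq_maximalIdeal
  have hcomapm : m.comap φ = p₂ := Localization.AtPrime.comap_maximalIdeal
  -- every nonzero prime of A contains a' := φ a
  set a' : A := φ a with ha'
  have ha'0 : a' ≠ 0 := fun h => ha (hinj (by simpa using h))
  have hall' : ∀ Q : Ideal A, Q.IsPrime → Q ≠ ⊥ → a' ∈ Q := by
    intro Q hQ hQ0
    have hcom : (Q.comap φ).IsPrime := hQ.comap φ
    have hco0 : Q.comap φ ≠ ⊥ := by
      intro h
      apply hQ0
      have h2 := IsLocalization.map_comap p₂.primeCompl A Q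
      change Ideal.map φ (Q.comap φ) = Q at h2
      rw [← h2, h, Ideal.map_bot]
    exact Ideal.mem_comap.mp (hall _ hcom hco0)
  -- the image of p₁ is a nonzero prime strictly below m containing a'
  have hdisj : Disjoint (p₂.primeCompl : Set B) (p₁ : Set B) := by
    rw [Set.disjoint_left]
    exact fun z hz hzq => hz (h12.le hzq)
  have hp₁' : (p₁.map φ).IsPrime :=
    IsLocalization.isPrime_of_isPrime_disjoint p₂.primeCompl A p₁ hp₁ hdisj
  have hcomapp₁ : (p₁.map φ).comap φ = p₁ :=
    IsLocalization.comap_map_of_isPrime_disjoint p₂.primeCompl A hp₁ hdisj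
  have hp₁'0 : p₁.map φ ≠ ⊥ := by
    intro h
    rw [h, Ideal.comap_bot_of_injective φ hinj] at hcomapp₁
    exact h1 hcomapp₁.symm
  have hp₁'m : p₁.map φ < m := by
    refine lt_of_le_of_ne (IsLocalRing.le_maximalIdeal hp₁'.ne_top) ?_
    intro h
    rw [h, hcomapm] at hcomapp₁
    exact (ne_of_lt h12) hcomapp₁.symm
  have ha'p₁ : a' ∈ p₁.map φ := hall' _ hp₁' hp₁'0
  -- minimal primes over span {a'}
  set M : Set (Ideal A) := (Ideal.span {a'}).minimalPrimes with hM
  have hMfin : M.Finite := by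
    rw [hM, Ideal.minimalPrimes_eq_comap]
    exact Set.Finite.image _ (minimalPrimes.finite_of_isNoetherianRing _)
  have hMprime : ∀ Q ∈ M, Q.IsPrime := fun Q hQ => hQ.1.1
  have hMnm : ∀ Q ∈ M, Q ≠ m := by
    intro Q hQ h
    have : Q ≤ p₁.map φ := h ▸ hQ.2
      ⟨hp₁', by rwa [Ideal.span_le, Set.singleton_subset_iff]⟩ (h ▸ hp₁'m.le)
    rw [h] at this
    exact (not_le_of_gt hp₁'m) this
  -- prime avoidance: pick b ∈ m avoiding all minimal primes of span {a'}
  have hnotsub : ¬ ((m : Set A) ⊆ ⋃ Q ∈ (hMfin.toFinset : Set (Ideal A)), (Q : Set A)) := by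
    intro hsub
    have := (Ideal.subset_union_prime (⊥ : Ideal A) (⊥ : Ideal A) ?_).mp hsub
    · obtain ⟨Q, hQs, hmQ⟩ := this
      rw [Set.Finite.mem_toFinset] at hQs
      have hQm : Q ≤ m := IsLocalRing.le_maximalIdeal (hMprime Q hQs).ne_top
      exact hMnm Q hQs (le_antisymm hQm hmQ)
    · intro Q hQs _ _
      rw [Set.Finite.mem_toFinset] at hQs
      exact hMprime Q hQs
  obtain ⟨b, hbm, hbQ⟩ : ∃ b ∈ m, ∀ Q ∈ M, b ∉ Q := by
    rw [Set.not_subset] at hnotsub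
    obtain ⟨b, hbm, hb⟩ := hnotsub
    refine ⟨b, hbm, ?_⟩
    intro Q hQ hbQ
    exact hb (Set.mem_biUnion (by rwa [Set.Finite.coe_toFinset]) hbQ)
  -- b is nonzero
  have hMne : M.Nonempty := by
    have hlem : Ideal.span {a'} ≤ p₁.map φ := by
      rwa [Ideal.span_le, Set.singleton_subset_iff]
    haveI := hp₁'
    obtain ⟨Q, hQ, _⟩ := Ideal.exists_minimalPrimes_le hlem
    exact ⟨Q, hQ⟩
  have hb0 : b ≠ 0 := by
    obtain ⟨Q₀, hQ₀⟩ := hMne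
    intro h
    exact hbQ Q₀ hQ₀ (h ▸ Q₀.zero_mem)
  -- a minimal prime over span {b} below m
  have hbmle : Ideal.span {b} ≤ m := by rwa [Ideal.span_le, Set.singleton_subset_iff]
  haveI : m.IsPrime := (IsLocalRing.maximalIdeal.isMaximal A).isPrime
  obtain ⟨P, hPmin, hPle⟩ := Ideal.exists_minimalPrimes_le hbmle
  have hPprime : P.IsPrime := hPmin.1.1
  have hbP : b ∈ P := hPmin.1.2 (Ideal.mem_span_singleton_self b)
  have hP0 : P ≠ ⊥ := fun h => hb0 (by rw [h] at hbP; simpa using hbP)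
  have ha'P : a' ∈ P := hall' P hPprime hP0
  -- a minimal prime over span {a'} inside P
  obtain ⟨Q₁, hQ₁M, hQ₁P⟩ := Ideal.exists_minimalPrimes_le
    (show Ideal.span {a'} ≤ P by rwa [Ideal.span_le, Set.singleton_subset_iff])
  have hQ₁prime : Q₁.IsPrime := hQ₁M.1.1
  have hQ₁lt : Q₁ < P := lt_of_le_of_ne hQ₁P (fun h => hbQ Q₁ hQ₁M (h ▸ hbP))
  have hQ₁0 : Q₁ ≠ ⊥ := by
    intro h
    have : a' ∈ Q₁ := hQ₁M.1.2 (Ideal.mem_span_singleton_self a')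
    rw [h] at this
    exact ha'0 (by simpa using this)
  exact hQ₁0 (aux_pit' hPmin hQ₁prime hQ₁lt)

/-- From a monic polynomial vanishing at a nonzero element of a domain we can get one with
nonzero constant coefficient. -/
lemma aux_poly {R : Type u} [CommRing R] {S : Type v} [CommRing S] [IsDomain S] [Algebra R S]
    {x : S} (hx : x ≠ 0) :
    ∀ (f : Polynomial R), f.Monic → Polynomial.aeval x f = 0 →
      ∃ g : Polynomial R, g.Monic ∧ Polynomial.aeval x g = 0 ∧ g.coeff 0 ≠ 0 := by
  suffices h : ∀ (n : ℕ) (f : Polynomial R), f.natDegree = n → f.Monic →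
      Polynomial.aeval x f = 0 →
      ∃ g : Polynomial R, g.Monic ∧ Polynomial.aeval x g = 0 ∧ g.coeff 0 ≠ 0 by
    exact fun f hm he => h f.natDegree f rfl hm he
  intro n
  induction n using Nat.strong_induction_on with
  | _ n ih =>
    intro f hn hmonic heval
    haveI : Nontrivial R := (algebraMap R S).domain_nontrivial
    by_cases hc : f.coeff 0 ≠ 0
    · exact ⟨f, hmonic, heval, hc⟩
    · push_neg at hc
      -- f = X * divX f
      have hfd : Polynomial.X * f.divX = f := by
        have := Polynomial.X_mul_divX_add f
        rwa [hc, map_zero, add_zero] at this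
      have hne : f.natDegree ≠ 0 := by
        intro h0
        have : f.coeff 0 = 1 := by
          have := hmonic.leadingCoeff
          rwa [Polynomial.leadingCoeff, h0] at this
        rw [hc] at this
        exact one_ne_zero this.symm
      have hdmonic : f.divX.Monic := by
        unfold Polynomial.Monic Polynomial.leadingCoeff
        rw [Polynomial.natDegree_divX_eq_natDegree_tsub_one, Polynomial.coeff_divX]
        have h1 : f.natDegree - 1 + 1 = f.natDegree := by omega
        rw [h1]
        exact hmonic
      have hdeval : Polynomial.aeval x f.divX = 0 := by
        have : Polynomial.aeval x (Polynomial.X * f.divX) = 0 := by rw [hfd]; exact heval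
        rw [map_mul, Polynomial.aeval_X] at this
        rcases mul_eq_zero.mp this with h | h
        · exact absurd h hx
        · exact h
      have hdlt : f.divX.natDegree < n := by
        rw [← hn, Polynomial.natDegree_divX_eq_natDegree_tsub_one]
        omega
      exact ih f.divX.natDegree hdlt f.divX rfl hdmonic hdeval

/-- Let `R` be a Noetherian domain of Krull dimension at least `2`.
Then the intersection of all nonzero prime ideals of `R⁺` is the zero ideal. -/
theorem stmt_12 (R : Type u) [CommRing R] [IsDomain R] [IsNoetherianRing R]
    (hdim : 2 ≤ ringKrullDim R) :
    (⨅ P ∈ {P : Ideal (RPlus R) | P.IsPrime ∧ P ≠ ⊥}, P) = ⊥ := by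
  set K := AlgebraicClosure (FractionRing R) with hK
  set T := RPlus R with hT
  -- injectivity of the structure map
  have hinjK : Function.Injective (algebraMap R K) := by
    rw [IsScalarTower.algebraMap_eq R (FractionRing R) K]
    exact (algebraMap (FractionRing R) K).injective.comp
      (IsFractionRing.injective R (FractionRing R))
  have hinjT : Function.Injective (algebraMap R T) := by
    intro a b h
    exact hinjK (congrArg Subtype.val h)
  haveI hint : Algebra.IsIntegral R T := ⟨fun x => integralClosure.isIntegral x⟩
  -- extract a chain of primes of length 2
  obtain ⟨c, hc⟩ : ∃ c : LTSeries (PrimeSpectrum R), 2 ≤ c.length := by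
    by_contra h
    push_neg at h
    have hle : ringKrullDim R ≤ 1 := by
      rw [ringKrullDim, Order.krullDim]
      apply iSup_le
      intro p
      have : p.length ≤ 1 := Nat.lt_succ_iff.mp (h p)
      exact_mod_cast this
    have : (2 : WithBot ℕ∞) ≤ 1 := le_trans hdim hle
    norm_num at this
  have h3 : 2 < c.length + 1 := by omega
  set P0 := c ⟨0, by omega⟩ with hP0
  set P1 := c ⟨1, by omega⟩ with hP1
  set P2 := c ⟨2, h3⟩ with hP2
  have h01 : P0 < P1 := c.strictMono (show (⟨0, by omega⟩ : Fin (c.length+1)) < ⟨1, by omega⟩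
    from by simp [Fin.lt_def])
  have h12 : P1 < P2 := c.strictMono (show (⟨1, by omega⟩ : Fin (c.length+1)) < ⟨2, h3⟩
    from by simp [Fin.lt_def])
  have hp₁ : P1.asIdeal.IsPrime := P1.isPrime
  have hp₂ : P2.asIdeal.IsPrime := P2.isPrime
  have h12' : P1.asIdeal < P2.asIdeal := h12
  have h1 : P1.asIdeal ≠ ⊥ := by
    intro h
    have h01' : P0.asIdeal < P1.asIdeal := h01
    rw [h] at h01'
    exact not_le_of_gt h01' bot_le
  -- main argument
  rw [eq_bot_iff]
  intro x hx
  rw [Submodule.mem_bot]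
  by_contra hx0
  have hxint : IsIntegral R x := integralClosure.isIntegral x
  obtain ⟨f, hfmonic, hfeval⟩ := hxint
  have hfeval' : Polynomial.aeval x f = 0 := by rwa [Polynomial.aeval_def]
  obtain ⟨g, hgmonic, hgeval, hgc⟩ := aux_poly hx0 f hfmonic hfeval'
  set a := g.coeff 0 with haa
  have ha0 : a ≠ 0 := hgc
  obtain ⟨p, hpprime, hp0, hap⟩ := aux_exists_prime_not_mem hp₁ hp₂ h1 h12' ha0
  -- lying over
  haveI := hpprime
  obtain ⟨Q, hQprime, hQcomap⟩ :=
    Ideal.exists_ideal_over_prime_of_isIntegral_of_isDomain (S := T) p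
      (by rw [(RingHom.injective_iff_ker_eq_bot _).mp hinjT]; exact bot_le)
  have hQ0 : Q ≠ ⊥ := by
    intro h
    rw [h, Ideal.comap_bot_of_injective _ hinjT] at hQcomap
    exact hp0 hQcomap.symm
  -- x belongs to Q
  have hxQ : x ∈ Q := by
    have h1 := Ideal.mem_iInf.mp hx Q
    have h2 := Ideal.mem_iInf.mp h1 ⟨hQprime, hQ0⟩
    exact h2
  -- the constant coefficient lands in Q
  have hkey : algebraMap R T a ∈ Q := by
    have h1 : Polynomial.aeval x (Polynomial.X * g.divX + Polynomial.C a) = 0 := by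
      rw [Polynomial.X_mul_divX_add]
      exact hgeval
    rw [map_add, map_mul, Polynomial.aeval_X, Polynomial.aeval_C] at h1
    have h2 : algebraMap R T a = -(x * Polynomial.aeval x g.divX) := by
      linear_combination h1
    rw [h2]
    exact Q.neg_mem (Ideal.mul_mem_right _ Q hxQ)
  have : a ∈ p := by
    rw [← hQcomap]
    exact hkey
  exact hap this
end

section
/- Let (R, m) be a one-dimensional Noetherian complete local domain containing a field. Then there exists a subring R' of R such that the inclusion R' ↪ R is not cyclically pure, i.e., there exists an ideal a of R' with aR ∩ R' ≠ a. -/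
set_option synthInstance.maxHeartbeats 400000
set_option maxHeartbeats 1000000

universe u

/-- Let `(R, m)` be a one-dimensional Noetherian complete local
domain containing a field. Then there exists a subring `R'` of `R` such that the
inclusion `R' ↪ R` is not cyclically pure: some ideal `a` of `R'` satisfies
`aR ∩ R' ≠ a`. -/
theorem stmt_14 (R : Type u) [CommRing R] [IsDomain R] [IsNoetherianRing R]
    [IsLocalRing R] [IsAdicComplete (IsLocalRing.maximalIdeal R) R]
    (hdim : ringKrullDim R = 1) (hfield : ∃ F : Subring R, IsField F) :
    ∃ R' : Subring R, ∃ a : Ideal R',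
      Ideal.comap (Subring.subtype R') (Ideal.map (Subring.subtype R') a) ≠ a := by
  classical
  obtain ⟨F, hF⟩ := hfield
  -- `R` is not a field, since its Krull dimension is `1 ≠ 0`.
  have hnf : ¬ IsField R := by
    intro h
    rw [ringKrullDim_eq_zero_of_isField h] at hdim
    exact absurd hdim (by norm_num)
  have hm : IsLocalRing.maximalIdeal R ≠ ⊥ := by
    intro h
    exact hnf (IsLocalRing.isField_iff_maximalIdeal_eq.mpr h)
  obtain ⟨x, hxm, hx0⟩ := Submodule.exists_mem_ne_zero_of_ne_bot hm
  letI : Field F := hF.toField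
  letI : Algebra F R := F.subtype.toAlgebra
  -- The subalgebra of elements expressible as polynomials in `x` with zero linear term.
  let S : Subalgebra F R :=
    { carrier := {y | ∃ p : Polynomial F, p.coeff 1 = 0 ∧ Polynomial.aeval x p = y}
      mul_mem' := by
        rintro a b ⟨p, hp, rfl⟩ ⟨q, hq, rfl⟩
        refine ⟨p * q, ?_, map_mul _ _ _⟩
        rw [Polynomial.coeff_mul, Finset.Nat.sum_antidiagonal_eq_sum_range_succ_mk]
        simp [Finset.sum_range_succ, hp, hq]
      one_mem' := ⟨1, by rw [Polynomial.coeff_one]; norm_num, map_one _⟩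
      add_mem' := by
        rintro a b ⟨p, hp, rfl⟩ ⟨q, hq, rfl⟩
        exact ⟨p + q, by simp [hp, hq], map_add _ _ _⟩
      zero_mem' := ⟨0, by simp, map_zero _⟩
      algebraMap_mem' := fun c => ⟨Polynomial.C c, by simp, Polynomial.aeval_C x c⟩ }
  have hx2S : x ^ 2 ∈ S := ⟨Polynomial.X ^ 2, by simp [Polynomial.coeff_X_pow], by simp⟩
  have hx3S : x ^ 3 ∈ S := ⟨Polynomial.X ^ 3, by simp [Polynomial.coeff_X_pow], by simp⟩
  -- `R'` is the subalgebra generated by `x^2` and `x^3`.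
  set A : Subalgebra F R := Algebra.adjoin F {x ^ 2, x ^ 3} with hA
  have hx2 : x ^ 2 ∈ A := Algebra.subset_adjoin (by simp)
  have hx3 : x ^ 3 ∈ A := Algebra.subset_adjoin (by simp)
  have hAS : A ≤ S := by
    apply Algebra.adjoin_le
    rintro y (rfl | rfl)
    · exact hx2S
    · exact hx3S
  -- The key point: `x ∉ R'`.
  have hxA : x ∉ A := by
    intro hx
    obtain ⟨p, hp1, hpx⟩ := hAS hx
    have hq : Polynomial.aeval x (p - Polynomial.X) = 0 := by
      simp [map_sub, hpx]
    have hqne : p - Polynomial.X ≠ 0 := by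
      intro h
      have := congrArg (fun r => Polynomial.coeff r 1) h
      simp [hp1] at this
    have halg : IsAlgebraic F x := ⟨p - Polynomial.X, hqne, hq⟩
    have hunit : IsUnit x := halg.isIntegral.isUnit hx0
    exact (IsLocalRing.mem_maximalIdeal x).mp hxm hunit
  refine ⟨A.toSubring, Ideal.span {⟨x ^ 2, hx2⟩}, ?_⟩
  set R' : Subring R := A.toSubring with hR'
  set x2 : R' := ⟨x ^ 2, hx2⟩ with hx2def
  set x3 : R' := ⟨x ^ 3, hx3⟩ with hx3def
  intro heq
  -- `x^3` lies in the contraction of the extension of `(x^2)`.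
  have hmem : x3 ∈ Ideal.comap (Subring.subtype R') (Ideal.map (Subring.subtype R') (Ideal.span {x2})) := by
    rw [Ideal.mem_comap, Ideal.map_span]
    have : (Subring.subtype R') x3 = x ^ 3 := rfl
    rw [this, Set.image_singleton]
    have : (Subring.subtype R') x2 = x ^ 2 := rfl
    rw [this, Ideal.mem_span_singleton]
    exact ⟨x, by ring⟩
  rw [heq, Ideal.mem_span_singleton] at hmem
  obtain ⟨c, hc⟩ := hmem
  have hcR : x ^ 3 = x ^ 2 * (c : R) := congrArg Subtype.val hc
  have hx2ne : x ^ 2 ≠ 0 := pow_ne_zero 2 hx0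
  have hcx : (c : R) = x := by
    have : x ^ 2 * x = x ^ 2 * (c : R) := by rw [← hcR]; ring
    exact (mul_left_cancel₀ hx2ne this).symm
  exact hxA (hcx ▸ c.2)
end

section
/- Let (R, m) be a Noetherian local domain and let v : R^+ → ℚ ∪ {∞} be a valuation that is nonnegative on R^+ and strictly positive on the ideal mR^+. Then for every nonzero prime ideal P of R^+ and every ε > 0 there exists a ∈ P with v(a) < ε; consequently the R^+-module R^+/P is almost zero with respect to v. -/
set_option synthInstance.maxHeartbeats 400000
set_option maxHeartbeats 1000000

universe u

lemma rplus_root (R : Type u) [CommRing R] [IsDomain R] (x : RPlus R) {n : ℕ}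
    (hn : n ≠ 0) : ∃ y : RPlus R, y ^ n = x := by
  set K := AlgebraicClosure (FractionRing R)
  obtain ⟨z, hz⟩ := IsAlgClosed.exists_pow_nat_eq (x : K) (Nat.pos_of_ne_zero hn)
  have hint : IsIntegral (RPlus R) z := by
    refine ⟨Polynomial.X ^ n - Polynomial.C x, Polynomial.monic_X_pow_sub_C x hn, ?_⟩
    simp only [Polynomial.eval₂_sub, Polynomial.eval₂_X_pow, Polynomial.eval₂_C, hz]; exact sub_eq_zero.mpr rfl
  have : IsIntegral R z := isIntegral_trans z hint
  exact ⟨⟨z, this⟩, Subtype.ext (by simpa using hz)⟩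

/-- Let `(R, m)` be a Noetherian local domain and let
`v : R⁺ → ℚ ∪ {∞}` be a valuation, nonnegative on `R⁺` and strictly positive on
`mR⁺`, with `v(a) = ∞` iff `a = 0`. Then for every nonzero prime ideal `P` of `R⁺`
and every `ε > 0` there exists `a ∈ P` with `v(a) < ε`; consequently the `R⁺`-module
`R⁺/P` is almost zero with respect to `v`. -/
theorem stmt_16 (R : Type u) [CommRing R] [IsDomain R] [IsNoetherianRing R]
    [IsLocalRing R]
    (v : AddValuation (RPlus R) (WithTop ℚ))
    (hnn : ∀ a : RPlus R, 0 ≤ v a)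
    (hpos : ∀ a ∈ Ideal.map (algebraMap R (RPlus R)) (IsLocalRing.maximalIdeal R),
      (0 : WithTop ℚ) < v a)
    (hsupp : ∀ a : RPlus R, v a = ⊤ ↔ a = 0)
    (P : Ideal (RPlus R)) (hP : P.IsPrime) (hP0 : P ≠ ⊥) :
    (∀ ε : ℚ, 0 < ε → ∃ a ∈ P, v a < (ε : WithTop ℚ)) ∧
    (∀ (y : RPlus R ⧸ P) (ε : ℚ), 0 < ε →
      ∃ a : RPlus R, v a < (ε : WithTop ℚ) ∧ a • y = 0) := by
  have main : ∀ ε : ℚ, 0 < ε → ∃ a ∈ P, v a < (ε : WithTop ℚ) := by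
    intro ε hε
    obtain ⟨x, hxP, hx0⟩ := Submodule.exists_mem_ne_zero_of_ne_bot hP0
    -- v x is a finite rational q ≥ 0
    have hvx : v x ≠ ⊤ := fun h => hx0 ((hsupp x).mp h)
    obtain ⟨q, hq⟩ := WithTop.ne_top_iff_exists.mp hvx
    have hq0 : 0 ≤ q := by
      have := hnn x
      rw [← hq] at this
      exact_mod_cast this
    -- choose n with q < n * ε
    obtain ⟨n, hn⟩ := exists_nat_gt (q / ε)
    have hn0 : n ≠ 0 := by
      rintro rfl
      simp only [Nat.cast_zero] at hn
      exact absurd hn (not_lt.mpr (div_nonneg hq0 hε.le))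
    have hqn : q < n * ε := (div_lt_iff₀ hε).mp hn
    obtain ⟨y, hy⟩ := rplus_root R x hn0
    have hyP : y ∈ P := hP.mem_of_pow_mem n (hy ▸ hxP)
    have hy0 : y ≠ 0 := by
      rintro rfl
      simp [zero_pow hn0] at hy
      exact hx0 hy.symm
    have hvy : v y ≠ ⊤ := fun h => hy0 ((hsupp y).mp h)
    obtain ⟨r, hr⟩ := WithTop.ne_top_iff_exists.mp hvy
    have hpow : n • v y = v x := by
      rw [← v.map_pow, hy]
    have hnr : (n : ℚ) * r = q := by
      rw [← hr, ← hq] at hpow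
      have h2 : n • r = q := by exact_mod_cast hpow
      rw [← h2, nsmul_eq_mul]
    refine ⟨y, hyP, ?_⟩
    rw [← hr]
    have : r < ε := by
      rw [← hnr] at hqn
      have hn' : (0 : ℚ) < n := by exact_mod_cast Nat.pos_of_ne_zero hn0
      exact lt_of_mul_lt_mul_left hqn hn'.le
    exact_mod_cast this
  refine ⟨main, fun y ε hε => ?_⟩
  obtain ⟨a, haP, hav⟩ := main ε hε
  obtain ⟨b, rfl⟩ := Ideal.Quotient.mk_surjective y
  refine ⟨a, hav, ?_⟩
  have : a • (Ideal.Quotient.mk P b) = Ideal.Quotient.mk P (a * b) := rfl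
  rw [this, Ideal.Quotient.eq_zero_iff_mem]
  exact P.mul_mem_right b haP
end

section
/- Let R be an integral domain and let a be a radical ideal of the absolute integral closure R^+. Then a^n = a for every integer n ≥ 1; in particular a = a^2. -/
set_option synthInstance.maxHeartbeats 400000
set_option maxHeartbeats 1000000

universe u

/-- Let `R` be an integral domain and let `a` be a radical ideal of
`R⁺`. Then `a^n = a` for every `n ≥ 1`; in particular `a = a^2`. -/
theorem stmt_19 (R : Type u) [CommRing R] [IsDomain R]
    (a : Ideal (RPlus R)) (ha : a.IsRadical) :
    (∀ n : ℕ, 1 ≤ n → a ^ n = a) ∧ a = a ^ 2 := by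
  have key : ∀ n : ℕ, 1 ≤ n → a ^ n = a := by
    intro n hn
    apply le_antisymm (Ideal.pow_le_self (by omega))
    intro x hx
    -- find an n-th root of x in RPlus R
    obtain ⟨y, hy⟩ := IsAlgClosed.exists_pow_nat_eq (x : AlgebraicClosure (FractionRing R)) (n := n) (by omega)
    have hyint : IsIntegral R y := by
      have : IsIntegral R (y ^ n) := hy ▸ x.2
      exact this.of_pow (by omega)
    set z : RPlus R := ⟨y, hyint⟩ with hz
    have hzx : z ^ n = x := by
      ext
      simpa using hy
    have hzmem : z ∈ a := ha ⟨n, by rw [hzx]; exact hx⟩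
    rw [← hzx]
    exact Ideal.pow_mem_pow hzmem n
  exact ⟨key, (key 2 (by omega)).symm⟩
end
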